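/- arXiv:2004.02197 — 5 statements merged into one kernel-verified Lean document; each statement's English description precedes it below -/
import Mathlib

section
/- Let n ≥ 5 and let g be an integer with 2 ≤ g ≤ n−3. In the path-star tree P_{n−g,g}, for every path vertex i with 1 ≤ i ≤ n−g, the number of subtrees of P_{n−g,g} containing i equals f(i) = i·(n−g−i) + i·2^g. -/
/-!
Let `c` be the path vertex carrying the pendant vertices and `p ≤ c` a path vertex. Removing a
path vertex `z` separates the vertices before `z` from those after it, so a subtree containing
`p` contains every path vertex between `p` and any of its vertices; conversely such a
set is connected, because each of its vertices other than `p` has a neighbour in it closer to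
`p`. So a subtree containing `p` is either a segment `[a, b]` with `a ≤ p ≤ b < c`, or the
segment `[a, c]` together with an arbitrary set of pendant vertices, which gives
`(p + 1) (c - p) + (p + 1) 2 ^ g` subtrees.
-/

open scoped Classical

noncomputable section

namespace TreeCenters

variable {V : Type*}

/-- The number of subtrees of `G` (nonempty vertex sets inducing a connected
subgraph) containing the vertex `v`. -/
def subtreeCount (G : SimpleGraph V) (v : V) : ℕ :=
  Nat.card {S : Finset V // v ∈ S ∧ (G.induce (S : Set V)).Connected}

/-- The subtree core: the set of vertices maximizing the number of subtrees
containing them. -/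
def subtreeCore (G : SimpleGraph V) : Set V :=
  {v | ∀ u, subtreeCount G u ≤ subtreeCount G v}

/-- The eccentricity of a vertex. -/
def eccent (G : SimpleGraph V) (v : V) : ℕ :=
  sSup (Set.range fun u => G.dist v u)

/-- The center: the set of vertices of minimum eccentricity. -/
def center (G : SimpleGraph V) : Set V :=
  {v | ∀ u, eccent G v ≤ eccent G u}

/-- The weight of a vertex `v`: the maximum number of vertices of a connected
component of `G - v`. -/
def weight (G : SimpleGraph V) (v : V) : ℕ :=
  sSup (Set.range fun c : (G.induce {u | u ≠ v}).ConnectedComponent => Nat.card c.supp)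

/-- The centroid: the set of vertices of minimum weight. -/
def centroid (G : SimpleGraph V) : Set V :=
  {v | ∀ u, weight G v ≤ weight G u}

/-- The set of (real) eigenvalues of the Laplacian matrix of `G`. -/
def lapEigenvalues [Fintype V] [DecidableEq V] (G : SimpleGraph V) : Set ℝ :=
  {t | ∃ Y : V → ℝ, Y ≠ 0 ∧ (G.lapMatrix ℝ).mulVec Y = t • Y}

/-- The algebraic connectivity: the second smallest eigenvalue of the
Laplacian matrix of `G`. -/
def algConn [Fintype V] [DecidableEq V] (G : SimpleGraph V) : ℝ :=
  sInf (lapEigenvalues G \ {sInf (lapEigenvalues G)})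

/-- A Fiedler vector: an eigenvector of the Laplacian corresponding to the
algebraic connectivity. -/
def IsFiedler [Fintype V] [DecidableEq V] (G : SimpleGraph V) (Y : V → ℝ) : Prop :=
  Y ≠ 0 ∧ (G.lapMatrix ℝ).mulVec Y = algConn G • Y

/-- The characteristic set of `G`, regarded as a set of vertices: it consists of
the characteristic vertices together with the endpoints of characteristic edges. -/
def charSet [Fintype V] [DecidableEq V] (G : SimpleGraph V) : Set V :=
  {v | ∃ Y : V → ℝ, IsFiedler G Y ∧
    ((Y v = 0 ∧ ∃ u, G.Adj u v ∧ Y u ≠ 0) ∨ (∃ u, G.Adj u v ∧ Y u * Y v < 0))}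

/-- The distance between two sets of vertices: the minimum of the pairwise
distances. -/
def setDist (G : SimpleGraph V) (A B : Set V) : ℕ :=
  sInf {d | ∃ a ∈ A, ∃ b ∈ B, d = G.dist a b}

/-- The diameter of a graph: the maximum distance between two vertices. -/
def graphDiam (G : SimpleGraph V) : ℕ :=
  sSup (Set.range fun p : V × V => G.dist p.1 p.2)

/-- The path-star tree `P_{n-g,g}`: the path `1 - 2 - ⋯ - (n-g)` (here `0`-indexed,
so the vertex with label `i` is the index `i - 1`) with `g` pendant vertices
(indices `n-g, …, n-1`) attached to the vertex with label `n - g` (index `n-g-1`). -/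
def pathStar (n g : ℕ) : SimpleGraph (Fin n) :=
  SimpleGraph.fromRel fun i j =>
    (i.val + 1 = j.val ∧ j.val < n - g) ∨ (i.val = n - g - 1 ∧ n - g ≤ j.val)

/-- The tree `T_{n,k}`: the path `[v_1, …, v_{k+1}]` (vertex `v_i` has index `i - 1`)
with `n - k - 1` pendant vertices (indices `k+1, …, n-1`) attached to the vertex
`v_{⌊(k+2)/2⌋}` (index `⌊(k+2)/2⌋ - 1 = ⌊k/2⌋`). -/
def Tnk (n k : ℕ) : SimpleGraph (Fin n) :=
  SimpleGraph.fromRel fun i j =>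
    (i.val + 1 = j.val ∧ j.val ≤ k) ∨ (i.val = k / 2 ∧ k + 1 ≤ j.val)

/-- The tree `T(l,m,k)` on `n = l + m + k` vertices: the path `[v_1, …, v_k]`
(vertex `v_i` has index `i - 1`) with `l` pendant vertices (indices `k, …, k+l-1`)
attached to `v_1` and `m` pendant vertices (indices `k+l, …, n-1`) attached to `v_k`. -/
def Tlmk (n l m k : ℕ) : SimpleGraph (Fin n) :=
  SimpleGraph.fromRel fun i j =>
    (i.val + 1 = j.val ∧ j.val < k) ∨ (i.val = 0 ∧ k ≤ j.val ∧ j.val < k + l) ∨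
      (i.val = k - 1 ∧ k + l ≤ j.val)

/-- `g₀` is the smallest positive integer such that `2 ^ g₀ + 1 > n - g₀`. -/
def IsMinimalG0 (n g₀ : ℕ) : Prop :=
  0 < g₀ ∧ n - g₀ < 2 ^ g₀ + 1 ∧ ∀ g, 0 < g → n - g < 2 ^ g + 1 → g₀ ≤ g

/-- `δ_n(C, C_d)`: the maximum over all trees on `n` vertices of the distance
between the center and the centroid. -/
def deltaCCd (n : ℕ) : ℕ :=
  sSup {d | ∃ G : SimpleGraph (Fin n), G.IsTree ∧ d = setDist G (center G) (centroid G)}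

/-- `δ_n(C, S_c)`: the maximum over all trees on `n` vertices of the distance
between the center and the subtree core. -/
def deltaCSc (n : ℕ) : ℕ :=
  sSup {d | ∃ G : SimpleGraph (Fin n), G.IsTree ∧ d = setDist G (center G) (subtreeCore G)}

/-- `δ_n(C_d, S_c)`: the maximum over all trees on `n` vertices of the distance
between the centroid and the subtree core. -/
def deltaCdSc (n : ℕ) : ℕ :=
  sSup {d | ∃ G : SimpleGraph (Fin n), G.IsTree ∧ d = setDist G (centroid G) (subtreeCore G)}

/-- `δ_n(χ, S_c)`: the maximum over all trees on `n` vertices of the distance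
between the characteristic set and the subtree core. -/
def deltaChiSc (n : ℕ) : ℕ :=
  sSup {d | ∃ G : SimpleGraph (Fin n), G.IsTree ∧ d = setDist G (charSet G) (subtreeCore G)}


theorem _root_.SimpleGraph.Reachable.iff_of_forall_adj {V : Type*} {G : SimpleGraph V}
    (P : V → Prop) (hP : ∀ u w, G.Adj u w → (P u ↔ P w)) {u w : V} (h : G.Reachable u w) :
    P u ↔ P w := by
  obtain ⟨q⟩ := h
  induction q with
  | nil => rfl
  | cons hadj _ ih => exact (hP _ _ hadj).trans ih

theorem _root_.SimpleGraph.induce_connected_of_descent {V : Type*} {G : SimpleGraph V}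
    {s : Set V} {u : V} (hu : u ∈ s) (r : V → ℕ)
    (h : ∀ y ∈ s, y ≠ u → ∃ x ∈ s, G.Adj x y ∧ r x < r y) :
    (G.induce s).Connected := by
  have reach : ∀ y (hy : y ∈ s), (G.induce s).Reachable ⟨u, hu⟩ ⟨y, hy⟩ := by
    intro y
    induction hk : r y using Nat.strong_induction_on generalizing y with
    | _ k ih =>
      intro hy
      by_cases hyu : y = u
      · subst hyu; rfl
      obtain ⟨x, hx, hxy, hr⟩ := h y hy hyu
      exact (ih _ (hk ▸ hr) x rfl hx).trans (SimpleGraph.Adj.reachable hxy)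
  have : Nonempty s := ⟨⟨u, hu⟩⟩
  exact .mk fun x y => (reach x.1 x.2).symm.trans (reach y.1 y.2)

section PathStar

/- `c` is the centre of the star, pinned down by `hc : c.val + 1 = n - g`: the path vertices are
those `≤ c` and the pendant vertices those `> c`. -/
variable {n g : ℕ} {c : Fin n}

theorem pathStar_adj_lt_iff (hc : c.val + 1 = n - g) {u w z : Fin n} (hz : z ≤ c)
    (hu : u ≠ z) (hw : w ≠ z) (h : (pathStar n g).Adj u w) : u < z ↔ w < z := by
  simp only [pathStar, SimpleGraph.fromRel_adj] at h
  omega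

def PathClosed (c p : Fin n) (S : Finset (Fin n)) : Prop :=
  ∀ y ∈ S, ∀ z ∈ Finset.uIcc p y, z ≤ c → z ∈ S

theorem PathClosed.mem {p y z : Fin n} {S : Finset (Fin n)} (hS : PathClosed c p S) (hy : y ∈ S)
    (hz : y ≤ z ∧ z ≤ p ∨ p ≤ z ∧ z ≤ y) (hzc : z ≤ c) : z ∈ S :=
  hS y hy z (by simp only [Finset.mem_uIcc, inf_le_iff, le_sup_iff]; omega) hzc

theorem pathClosed_of_induce_connected (hc : c.val + 1 = n - g) {p : Fin n} {S : Finset (Fin n)}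
    (hpS : p ∈ S) (hS : ((pathStar n g).induce (S : Set (Fin n))).Connected) :
    PathClosed c p S := by
  intro y hy z hz hzc
  by_contra hzS
  have side := (hS.preconnected ⟨p, hpS⟩ ⟨y, hy⟩).iff_of_forall_adj (fun x => x.1 < z)
    fun a b hab => pathStar_adj_lt_iff hc hzc (ne_of_mem_of_not_mem a.2 hzS)
      (ne_of_mem_of_not_mem b.2 hzS) (SimpleGraph.induce_adj.mp hab)
  have hpz : p ≠ z := ne_of_mem_of_not_mem hpS hzS
  have hyz : y ≠ z := ne_of_mem_of_not_mem hy hzS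
  simp only [Finset.mem_uIcc, inf_le_iff, le_sup_iff] at hz side
  omega

theorem pathStar_induce_connected_of_pathClosed (hc : c.val + 1 = n - g) {p : Fin n}
    (hp : p ≤ c) {S : Finset (Fin n)} (hpS : p ∈ S) (hS : PathClosed c p S) :
    ((pathStar n g).induce (S : Set (Fin n))).Connected := by
  refine SimpleGraph.induce_connected_of_descent hpS (fun y => Nat.dist y p) fun y hy hyp => ?_
  suffices ∃ x ∈ Finset.uIcc p y, x ≤ c ∧ (pathStar n g).Adj x y ∧
      Nat.dist x p < Nat.dist y p by
    obtain ⟨x, hx, hxc, hxy, hr⟩ := this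
    exact ⟨x, hS y hy x hx hxc, hxy, hr⟩
  simp only [Finset.mem_uIcc, inf_le_iff, le_sup_iff, pathStar, SimpleGraph.fromRel_adj, Nat.dist]
  rcases lt_or_gt_of_ne hyp with hlt | hgt
  · obtain ⟨x, hx⟩ : ∃ x : Fin n, x.val = y.val + 1 := ⟨⟨y.val + 1, by omega⟩, rfl⟩
    exact ⟨x, by omega⟩
  · by_cases hyc : y ≤ c
    · obtain ⟨x, hx⟩ : ∃ x : Fin n, x.val + 1 = y.val :=
        ⟨⟨y.val - 1, by omega⟩, Nat.sub_add_cancel (by omega)⟩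
      exact ⟨x, by omega⟩
    · exact ⟨c, by omega⟩

theorem pathStar_induce_connected_iff (hc : c.val + 1 = n - g) {p : Fin n} (hp : p ≤ c)
    {S : Finset (Fin n)} (hpS : p ∈ S) :
    ((pathStar n g).induce (S : Set (Fin n))).Connected ↔ PathClosed c p S :=
  ⟨pathClosed_of_induce_connected hc hpS, pathStar_induce_connected_of_pathClosed hc hp hpS⟩

def pathStarSubtree (c a : Fin n) : Fin n ⊕ Finset (Fin n) → Finset (Fin n)
  | .inl b => Finset.Icc a b
  | .inr L => Finset.Icc a c ∪ L

def pathStarSubtreeIndex (c p : Fin n) : Finset (Fin n × (Fin n ⊕ Finset (Fin n))) :=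
  Finset.Iic p ×ˢ (Finset.Ico p c).disjSum (Finset.Ioi c).powerset

theorem card_pathStarSubtreeIndex (c p : Fin n) :
    (pathStarSubtreeIndex c p).card = (p + 1) * (c - p + 2 ^ (n - 1 - c)) := by
  simp [pathStarSubtreeIndex, Fin.card_Iic, Fin.card_Ico, Fin.card_Ioi]

theorem mem_pathStarSubtreeIndex_inl {p a b : Fin n} :
    (a, .inl b) ∈ pathStarSubtreeIndex c p ↔ a ≤ p ∧ p ≤ b ∧ b < c := by
  simp [pathStarSubtreeIndex]

theorem mem_pathStarSubtreeIndex_inr {p a : Fin n} {L : Finset (Fin n)} :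
    (a, .inr L) ∈ pathStarSubtreeIndex c p ↔ a ≤ p ∧ ∀ y ∈ L, c < y := by
  simp [pathStarSubtreeIndex, Finset.subset_iff]

theorem pathStarSubtree_pathClosed {p a : Fin n} {x : Fin n ⊕ Finset (Fin n)} (hp : p ≤ c)
    (hx : (a, x) ∈ pathStarSubtreeIndex c p) :
    p ∈ pathStarSubtree c a x ∧ PathClosed c p (pathStarSubtree c a x) := by
  cases x with
  | inl b =>
    rw [mem_pathStarSubtreeIndex_inl] at hx
    simp only [pathStarSubtree, PathClosed, Finset.mem_Icc, Finset.mem_uIcc, inf_le_iff,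
      le_sup_iff]
    refine ⟨⟨hx.1, hx.2.1⟩, fun y hy z hz _ => ⟨?_, ?_⟩⟩ <;> omega
  | inr L =>
    obtain ⟨hap, hL⟩ := mem_pathStarSubtreeIndex_inr.mp hx
    simp only [pathStarSubtree, PathClosed, Finset.mem_union, Finset.mem_Icc, Finset.mem_uIcc,
      inf_le_iff, le_sup_iff]
    refine ⟨Or.inl ⟨hap, hp⟩, fun y hy z hz hzc => Or.inl ⟨?_, hzc⟩⟩
    rcases hy with hy | hy
    · omega
    · have := hL y hy
      omega

theorem isLeast_pathStarSubtree {p a : Fin n} {x : Fin n ⊕ Finset (Fin n)} (hp : p ≤ c)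
    (hx : (a, x) ∈ pathStarSubtreeIndex c p) :
    IsLeast (pathStarSubtree c a x : Set (Fin n)) a := by
  cases x with
  | inl b =>
    rw [mem_pathStarSubtreeIndex_inl] at hx
    refine ⟨by simp [pathStarSubtree]; omega, fun y hy => ?_⟩
    simp only [pathStarSubtree, Finset.coe_Icc, Set.mem_Icc] at hy
    exact hy.1
  | inr L =>
    obtain ⟨hap, hL⟩ := mem_pathStarSubtreeIndex_inr.mp hx
    refine ⟨by simp [pathStarSubtree]; omega, fun y hy => ?_⟩
    simp only [pathStarSubtree, Finset.coe_union, Finset.coe_Icc, Set.mem_union, Set.mem_Icc,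
      Finset.mem_coe] at hy
    rcases hy with hy | hy
    · exact hy.1
    · have := hL y hy
      omega

theorem exists_pathStarSubtree_eq {p : Fin n} {S : Finset (Fin n)} (hp : p ≤ c) (hpS : p ∈ S)
    (hS : PathClosed c p S) :
    ∃ x ∈ pathStarSubtreeIndex c p, pathStarSubtree c x.1 x.2 = S := by
  have hne : S.Nonempty := ⟨p, hpS⟩
  have hmin : ∀ y ∈ S, S.min' hne ≤ y := fun y hy => S.min'_le y hy
  have hap := hmin p hpS
  by_cases hcS : c ∈ S
  · refine ⟨(S.min' hne, .inr (S.filter (c < ·))), ?_, ?_⟩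
    · exact mem_pathStarSubtreeIndex_inr.mpr ⟨hap, fun y hy => (Finset.mem_filter.mp hy).2⟩
    · ext y
      simp only [pathStarSubtree, Finset.mem_union, Finset.mem_Icc, Finset.mem_filter]
      constructor
      · rintro (⟨h1, h2⟩ | ⟨hy, _⟩)
        · rcases le_total y p with h | h
          · exact hS.mem (S.min'_mem hne) (by omega) h2
          · exact hS.mem hcS (by omega) h2
        · exact hy
      · intro hy
        have := hmin y hy
        by_cases hyc : y ≤ c
        · exact Or.inl ⟨this, hyc⟩
        · exact Or.inr ⟨hy, by omega⟩
  · have hlt : ∀ y ∈ S, y < c := fun y hy => by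
      by_contra h
      exact hcS (hS.mem hy (by omega) le_rfl)
    have hbc := hlt _ (S.max'_mem hne)
    refine ⟨(S.min' hne, .inl (S.max' hne)), ?_, ?_⟩
    · exact mem_pathStarSubtreeIndex_inl.mpr ⟨hap, S.le_max' p hpS, hbc⟩
    · ext y
      simp only [pathStarSubtree, Finset.mem_Icc]
      constructor
      · rintro ⟨h1, h2⟩
        rcases le_total y p with h | h
        · exact hS.mem (S.min'_mem hne) (by omega) (by omega)
        · exact hS.mem (S.max'_mem hne) (by omega) (by omega)
      · intro hy
        exact ⟨hmin y hy, S.le_max' y hy⟩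

theorem center_mem_pathStarSubtree_iff {p a : Fin n} {x : Fin n ⊕ Finset (Fin n)} (hp : p ≤ c)
    (hx : (a, x) ∈ pathStarSubtreeIndex c p) : c ∈ pathStarSubtree c a x ↔ x.isRight := by
  cases x with
  | inl b => simp [pathStarSubtree, (mem_pathStarSubtreeIndex_inl.mp hx).2.2]
  | inr L => simp [pathStarSubtree, (mem_pathStarSubtreeIndex_inr.mp hx).1.trans hp]

theorem pathStarSubtree_injOn {p : Fin n} (hp : p ≤ c) :
    Set.InjOn (fun x : Fin n × (Fin n ⊕ Finset (Fin n)) => pathStarSubtree c x.1 x.2)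
      (pathStarSubtreeIndex c p) := by
  rintro ⟨a, x⟩ hx ⟨a', x'⟩ hx' h
  simp only [Finset.mem_coe] at hx hx' h
  obtain rfl : a = a' :=
    (isLeast_pathStarSubtree hp hx).unique (h ▸ isLeast_pathStarSubtree hp hx')
  have hside : x.isRight = x'.isRight := Bool.eq_iff_iff.mpr <|
    (center_mem_pathStarSubtree_iff hp hx).symm.trans (h ▸ center_mem_pathStarSubtree_iff hp hx')
  cases x <;> cases x' <;> simp only [Sum.isRight_inl, Sum.isRight_inr, reduceCtorEq] at hside
  case inl.inl b b' =>
    rw [mem_pathStarSubtreeIndex_inl] at hx hx'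
    simp only [pathStarSubtree, Finset.ext_iff, Finset.mem_Icc] at h
    have h₁ := h b; have h₂ := h b'
    simp only [Prod.mk.injEq, Sum.inl.injEq, true_and]
    omega
  case inr.inr L L' =>
    have hdisj : ∀ {L}, (a, .inr L) ∈ pathStarSubtreeIndex c p →
        Disjoint (Finset.Icc a c) L :=
      fun hL => Finset.disjoint_left.mpr fun y hy hyL => by
        have := (mem_pathStarSubtreeIndex_inr.mp hL).2 y hyL
        simp only [Finset.mem_Icc] at hy
        omega
    simp only [pathStarSubtree] at h
    rw [← Finset.union_sdiff_cancel_left (hdisj hx), h,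
      Finset.union_sdiff_cancel_left (hdisj hx')]

theorem subtreeCount_pathStar (hc : c.val + 1 = n - g) {p : Fin n} (hp : p ≤ c) :
    subtreeCount (pathStar n g) p = (p + 1) * (c - p + 2 ^ g) := by
  have hsubtrees : ({S | p ∈ S ∧ ((pathStar n g).induce (S : Set (Fin n))).Connected} :
      Finset (Finset (Fin n))) =
        (pathStarSubtreeIndex c p).image fun x => pathStarSubtree c x.1 x.2 := by
    ext S
    simp only [Finset.mem_filter, Finset.mem_univ, true_and, Finset.mem_image]
    constructor
    · rintro ⟨hpS, hS⟩
      exact exists_pathStarSubtree_eq hp hpS ((pathStar_induce_connected_iff hc hp hpS).mp hS)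
    · rintro ⟨x, hx, rfl⟩
      obtain ⟨hpS, hS⟩ := pathStarSubtree_pathClosed hp hx
      exact ⟨hpS, (pathStar_induce_connected_iff hc hp hpS).mpr hS⟩
  rw [subtreeCount, Nat.card_eq_fintype_card, Fintype.card_subtype, hsubtrees,
    Finset.card_image_of_injOn (pathStarSubtree_injOn hp), card_pathStarSubtreeIndex]
  congr 3
  omega

end PathStar

/-- In the path-star tree `P_{n-g,g}`, for every path vertex with
label `i`, `1 ≤ i ≤ n-g` (index `i - 1`), the number of subtrees containing it
equals `i * (n - g - i) + i * 2 ^ g`. -/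
theorem pathStar_subtreeCount (n g : ℕ) (i : ℕ) (hi1 : 1 ≤ i) (hi2 : i ≤ n - g) :
    subtreeCount (pathStar n g) ⟨i - 1, by omega⟩ = i * (n - g - i) + i * 2 ^ g := by
  rw [subtreeCount_pathStar (c := ⟨n - g - 1, by omega⟩) (Nat.sub_add_cancel (by omega))
    (Fin.mk_le_mk.mpr (by omega))]
  show (i - 1 + 1) * (n - g - 1 - (i - 1) + 2 ^ g) = _
  rw [Nat.sub_add_cancel hi1, Nat.mul_add]
  congr 2
  omega

end TreeCenters

end
end

section
/- Let n ≥ 5 and let g₀ be the smallest positive integer such that 2^{g₀} + 1 > n − g₀. Then for every integer k with 1 ≤ k ≤ g₀−2, the subtree core of the path-star tree P_{n−g₀+k, g₀−k} contains a path vertex of label at most n−g₀; that is, there exists α ≥ 0 such that the vertex n−g₀−α belongs to S_c(P_{n−g₀+k, g₀−k}). -/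
open scoped Classical

noncomputable section

namespace TreeCenters

variable {V : Type*}

/-!
Write `m` for the number of path vertices of `P_{m+g,g}` and index them `0, …, m - 1`, the hub
being `m - 1`. A subtree through the path vertex `i` is determined by its leftmost vertex
(`i + 1` choices) together with either its rightmost vertex, when that lies strictly before the
hub (`m - 1 - i` choices), or the set of leaves it contains, when it reaches the hub (`2 ^ g`
choices). Hence `f(i) = j (m + 2 ^ g - j)` with `j = i + 1`, which is maximal at
`j = ⌊(m + 2 ^ g) / 2⌋`, while a leaf lies in fewer subtrees than the hub. For `g = g₀ - k`,
the minimality of `g₀` gives `2 ^ g < m` and `2 ^ (g₀ - 1) ≤ n - g₀`, and the latter puts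
`⌊(m + 2 ^ g) / 2⌋` at most `n - g₀`.
-/

open Finset SimpleGraph

section InducedConnectivity

variable {G : SimpleGraph V} {s : Set V}

theorem exists_adj_of_induce_preconnected (hs : (G.induce s).Preconnected) {x z : V}
    (hx : x ∈ s) (hz : z ∈ s) (p : V → Prop) (hpx : p x) (hpz : ¬ p z) :
    ∃ α ∈ s, ∃ β ∈ s, G.Adj α β ∧ p α ∧ ¬ p β := by
  obtain ⟨w⟩ := hs ⟨x, hx⟩ ⟨z, hz⟩
  obtain ⟨d, -, hd, hd'⟩ := w.exists_boundary_dart {u | p u} hpx hpz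
  exact ⟨d.fst, d.fst.2, d.snd, d.snd.2, d.adj, hd, hd'⟩

theorem induce_connected_of_descent {r : V} (hr : r ∈ s) (φ : V → ℕ)
    (h : ∀ w ∈ s, w ≠ r → ∃ u ∈ s, G.Adj w u ∧ φ u < φ w) :
    (G.induce s).Connected := by
  rw [connected_iff_exists_forall_reachable]
  refine ⟨⟨r, hr⟩, fun w => ?_⟩
  induction hk : φ w using Nat.strong_induction_on generalizing w with
  | _ k ih =>
    by_cases hw : (w : V) = r
    · rw [show w = ⟨r, hr⟩ from Subtype.ext hw]
    obtain ⟨u, hu, hadj, hlt⟩ := h w w.2 hw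
    exact (ih _ (hk ▸ hlt) ⟨u, hu⟩ rfl).trans (Adj.reachable hadj.symm)

end InducedConnectivity

theorem subtreeCount_eq_card [Fintype V] [DecidableEq V] (G : SimpleGraph V) (v : V) :
    subtreeCount G v = #{S : Finset V | v ∈ S ∧ (G.induce (S : Set V)).Connected} := by
  rw [subtreeCount, Nat.card_eq_fintype_card, Fintype.card_subtype]

theorem mul_sub_le_half_mul_sub_half (s j : ℕ) : j * (s - j) ≤ s / 2 * (s - s / 2) := by
  generalize hd : s / 2 = d
  rcases le_total j s with hjs | hsj
  · zify [hjs, (by omega : d ≤ s)]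
    have h1 : (2 * d : ℤ) ≤ s := by omega
    have h2 : (s : ℤ) ≤ 2 * d + 1 := by omega
    rcases le_or_gt j d with hjd | hdj
    · nlinarith [mul_nonneg (by omega : (0 : ℤ) ≤ d - j) (by omega : (0 : ℤ) ≤ s - d - j)]
    · nlinarith [mul_nonneg (by omega : (0 : ℤ) ≤ j - d) (by omega : (0 : ℤ) ≤ j + d - s)]
  · simp [Nat.sub_eq_zero_of_le hsj]

theorem two_pow_add_le_two_pow_add (a j : ℕ) : 2 ^ a + j ≤ 2 ^ (a + j) :=
  calc 2 ^ a + j ≤ 2 ^ a * (j + 1) := by nlinarith [Nat.one_le_two_pow (n := a)]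
    _ ≤ 2 ^ a * 2 ^ j := Nat.mul_le_mul_left _ Nat.lt_two_pow_self
    _ = 2 ^ (a + j) := (pow_add 2 a j).symm

section PathStar

variable {m g : ℕ}

theorem pathStar_adj_iff (hm : 0 < m) {i j : Fin (m + g)} :
    (pathStar (m + g) g).Adj i j ↔
      (i.val + 1 = j.val ∧ j.val < m) ∨ (j.val + 1 = i.val ∧ i.val < m) ∨
        (i.val + 1 = m ∧ m ≤ j.val) ∨ (j.val + 1 = m ∧ m ≤ i.val) := by
  simp only [pathStar, fromRel_adj, Nat.add_sub_cancel, ne_eq, Fin.ext_iff]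
  omega

def segment (n a b : ℕ) : Finset (Fin n) := {i | a ≤ i.val ∧ i.val ≤ b}

def pendants (m g : ℕ) : Finset (Fin (m + g)) := {i | m ≤ i.val}

@[simp]
theorem mem_segment {n a b : ℕ} {i : Fin n} :
    i ∈ segment n a b ↔ a ≤ i.val ∧ i.val ≤ b := by
  simp [segment]

@[simp]
theorem mem_pendants {i : Fin (m + g)} : i ∈ pendants m g ↔ m ≤ i.val := by
  simp [pendants]

theorem card_pendants : #(pendants m g) = g := by
  have hsplit := card_filter_add_card_filter_not (s := univ) fun i : Fin (m + g) => i.val < m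
  rw [Fin.card_filter_val_lt, card_univ, Fintype.card_fin] at hsplit
  simp only [pendants, ← not_lt]
  omega

theorem segment_inj {n a b a' b' : ℕ} (hab : a ≤ b) (hb : b < n) (hab' : a' ≤ b')
    (hb' : b' < n) (h : segment n a b = segment n a' b') : a = a' ∧ b = b' := by
  have key (i : Fin n) := by simpa using Finset.ext_iff.1 h i
  have := key ⟨a, by omega⟩
  have := key ⟨b, by omega⟩
  have := key ⟨a', by omega⟩
  have := key ⟨b', by omega⟩
  simp only at *
  omega

theorem mem_of_le_of_le {S : Finset (Fin (m + g))}
    (hS : ((pathStar (m + g) g).induce (S : Set (Fin (m + g)))).Preconnected)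
    {x y z : Fin (m + g)} (hx : x ∈ S) (hz : z ∈ S) (hxy : x ≤ y) (hyz : y ≤ z)
    (hy : y.val < m) : y ∈ S := by
  by_contra hyS
  have hxy' : x < y := lt_of_le_of_ne hxy (by rintro rfl; exact hyS hx)
  obtain ⟨α, -, β, hβ, hadj, hαy, hyβ⟩ :=
    exists_adj_of_induce_preconnected hS hx hz (· < y) hxy' (not_lt.2 hyz)
  have hβy : β ≠ y := by rintro rfl; exact hyS hβ
  rw [pathStar_adj_iff (by omega)] at hadj
  simp only [not_lt, Fin.lt_def, ne_eq, Fin.ext_iff] at hαy hyβ hβy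
  omega

theorem exists_eq_segment_union_of_connected {S : Finset (Fin (m + g))}
    (hS : ((pathStar (m + g) g).induce (S : Set (Fin (m + g)))).Connected)
    {v : Fin (m + g)} (hvS : v ∈ S) (hv : v.val < m) :
    ∃ a b P, (a ≤ v.val ∧ v.val ≤ b ∧ b < m ∧ P ⊆ pendants m g ∧ (P = ∅ ∨ b + 1 = m)) ∧
      S = segment (m + g) a b ∪ P := by
  set Q := S.filter (·.val < m)
  have hvQ : v ∈ Q := mem_filter.2 ⟨hvS, hv⟩
  have hQ : Q.Nonempty := ⟨v, hvQ⟩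
  set x := Q.min' hQ
  set z := Q.max' hQ
  obtain ⟨hxS, -⟩ := mem_filter.1 (Q.min'_mem hQ)
  obtain ⟨hzS, hzm⟩ := mem_filter.1 (Q.max'_mem hQ)
  have mem_Q (i : Fin (m + g)) : i ∈ Q ↔ x ≤ i ∧ i ≤ z := by
    refine ⟨fun hi => ⟨Q.min'_le i hi, Q.le_max' i hi⟩, fun ⟨hxi, hiz⟩ => ?_⟩
    have him : i.val < m := lt_of_le_of_lt hiz hzm
    exact mem_filter.2 ⟨mem_of_le_of_le hS.preconnected hxS hzS hxi hiz him, him⟩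
  refine ⟨x.val, z.val, S.filter (m ≤ ·.val), ⟨Q.min'_le v hvQ, Q.le_max' v hvQ, hzm,
    fun i hi => mem_pendants.2 (mem_filter.1 hi).2, ?_⟩, ?_⟩
  · rcases (S.filter (m ≤ ·.val)).eq_empty_or_nonempty with h | ⟨p, hp⟩
    · exact Or.inl h
    · obtain ⟨hpS, hpm⟩ := mem_filter.1 hp
      set c : Fin (m + g) := ⟨m - 1, by omega⟩
      -- the hub lies between `v` and the leaf `p`
      have hcS : c ∈ S := mem_of_le_of_le hS.preconnected hvS hpS
        (Fin.le_def.2 (by simp only [c]; omega)) (Fin.le_def.2 (by simp only [c]; omega))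
        (by simp only [c]; omega)
      have hcz := Fin.le_def.1 (Q.le_max' c (mem_filter.2 ⟨hcS, by simp only [c]; omega⟩))
      simp only [c] at hcz
      omega
  · ext i
    rcases lt_or_ge i.val m with hi | hi
    · rw [mem_union, mem_segment, ← Fin.le_def, ← Fin.le_def, ← mem_Q, mem_filter, mem_filter]
      simp [hi, hi.not_ge]
    · have : ¬ i.val ≤ z.val := by omega
      simp [hi, this]

theorem connected_segment_union {a b : ℕ} {P : Finset (Fin (m + g))} (hab : a ≤ b) (hb : b < m)
    (hP : P ⊆ pendants m g) (hPb : P = ∅ ∨ b + 1 = m) :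
    ((pathStar (m + g) g).induce
      ((segment (m + g) a b ∪ P : Finset (Fin (m + g))) : Set (Fin (m + g)))).Connected := by
  refine induce_connected_of_descent (r := ⟨b, by omega⟩)
    (mem_union_left _ (mem_segment.2 ⟨hab, le_rfl⟩))
    (fun w => (b - w.val) + (w.val - b)) fun w hw hwb => ?_
  replace hwb : w.val ≠ b := fun h => hwb (Fin.ext h)
  rcases mem_union.1 (mem_coe.1 hw) with hw | hw
  · rw [mem_segment] at hw
    refine ⟨⟨w.val + 1, by omega⟩, mem_union_left _ (mem_segment.2 ⟨?_, ?_⟩),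
      (pathStar_adj_iff (by omega)).2 (Or.inl ⟨rfl, ?_⟩), ?_⟩ <;> dsimp only <;> omega
  · have hwm := mem_pendants.1 (hP hw)
    have hbm : b + 1 = m := hPb.resolve_left (ne_empty_of_mem hw)
    refine ⟨⟨b, by omega⟩, mem_union_left _ (mem_segment.2 ⟨hab, le_rfl⟩), ?_,
      by dsimp only; omega⟩
    exact (pathStar_adj_iff (by omega)).2 (Or.inr (Or.inr (Or.inr ⟨hbm, hwm⟩)))

/-- The codes `(a, b, P)` of the subtrees `segment a b ∪ P` through the path vertex `v`. -/
def subtreeCodes (m g v : ℕ) : Finset (ℕ × ℕ × Finset (Fin (m + g))) :=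
  range (v + 1) ×ˢ (Ico v (m - 1) ×ˢ {∅} ∪ {m - 1} ×ˢ (pendants m g).powerset)

theorem card_subtreeCodes (v : ℕ) :
    #(subtreeCodes m g v) = (v + 1) * (m - 1 - v + 2 ^ g) := by
  rw [subtreeCodes, card_product, card_range, card_union_of_disjoint, card_product, card_product,
    Nat.card_Ico, card_singleton, card_singleton, card_powerset, card_pendants, mul_one, one_mul]
  rw [Finset.disjoint_left]
  rintro ⟨b, P⟩ h₁ h₂
  simp only [mem_product, mem_Ico, mem_singleton] at h₁ h₂
  omega

theorem mem_subtreeCodes {v a b : ℕ} {P : Finset (Fin (m + g))} (hv : v < m) :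
    (a, b, P) ∈ subtreeCodes m g v ↔
      a ≤ v ∧ v ≤ b ∧ b < m ∧ P ⊆ pendants m g ∧ (P = ∅ ∨ b + 1 = m) := by
  simp only [subtreeCodes, mem_product, mem_range, mem_union, mem_Ico, mem_singleton, mem_powerset]
  constructor
  · rintro ⟨ha, ⟨⟨hvb, hbm⟩, rfl⟩ | ⟨rfl, hP⟩⟩
    · exact ⟨by omega, hvb, by omega, empty_subset _, Or.inl rfl⟩
    · exact ⟨by omega, by omega, by omega, hP, Or.inr (by omega)⟩
  · rintro ⟨ha, hvb, hbm, hP, hPb⟩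
    refine ⟨by omega, ?_⟩
    by_cases hb : b + 1 = m
    · exact Or.inr ⟨by omega, hP⟩
    · exact Or.inl ⟨⟨hvb, by omega⟩, hPb.resolve_right hb⟩

theorem filter_connected_eq_image {v : Fin (m + g)} (hv : v.val < m) :
    ({S | v ∈ S ∧ ((pathStar (m + g) g).induce (S : Set (Fin (m + g)))).Connected} :
        Finset (Finset (Fin (m + g)))) =
      (subtreeCodes m g v).image fun c => segment (m + g) c.1 c.2.1 ∪ c.2.2 := by
  ext S
  simp only [mem_filter, mem_univ, true_and, mem_image, Prod.exists]
  constructor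
  · rintro ⟨hvS, hS⟩
    obtain ⟨a, b, P, h, rfl⟩ := exists_eq_segment_union_of_connected hS hvS hv
    exact ⟨a, b, P, (mem_subtreeCodes hv).2 h, rfl⟩
  · rintro ⟨a, b, P, hc, rfl⟩
    obtain ⟨hav, hvb, hbm, hP, hPb⟩ := (mem_subtreeCodes hv).1 hc
    exact ⟨mem_union_left _ (mem_segment.2 ⟨hav, hvb⟩),
      connected_segment_union (hav.trans hvb) hbm hP hPb⟩

theorem filter_segment_union_val_lt {a b : ℕ} {P : Finset (Fin (m + g))} (hb : b < m)
    (hP : P ⊆ pendants m g) :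
    (segment (m + g) a b ∪ P).filter (·.val < m) = segment (m + g) a b := by
  ext i
  by_cases hi : i ∈ P
  · have := mem_pendants.1 (hP hi)
    simp only [mem_filter, mem_union, mem_segment, hi, or_true, true_and]
    omega
  · simp only [mem_filter, mem_union, mem_segment, hi, or_false]
    omega

theorem filter_segment_union_le_val {a b : ℕ} {P : Finset (Fin (m + g))} (hb : b < m)
    (hP : P ⊆ pendants m g) : (segment (m + g) a b ∪ P).filter (m ≤ ·.val) = P := by
  ext i
  by_cases hi : i ∈ P
  · simp [hi, mem_pendants.1 (hP hi)]
  · simp only [mem_filter, mem_union, mem_segment, hi, or_false, iff_false, not_and]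
    omega

theorem injOn_subtreeCodes {v : ℕ} (hv : v < m) :
    Set.InjOn (fun c : ℕ × ℕ × Finset (Fin (m + g)) => segment (m + g) c.1 c.2.1 ∪ c.2.2)
      (subtreeCodes m g v) := by
  rintro ⟨a, b, P⟩ hc ⟨a', b', P'⟩ hc' h
  obtain ⟨hav, hvb, hbm, hP, -⟩ := (mem_subtreeCodes hv).1 hc
  obtain ⟨hav', hvb', hbm', hP', -⟩ := (mem_subtreeCodes hv).1 hc'
  simp only at h
  have hseg := congrArg (filter (·.val < m)) h
  have hleaf := congrArg (filter (m ≤ ·.val)) h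
  rw [filter_segment_union_val_lt hbm hP, filter_segment_union_val_lt hbm' hP'] at hseg
  rw [filter_segment_union_le_val hbm hP, filter_segment_union_le_val hbm' hP'] at hleaf
  obtain ⟨rfl, rfl⟩ := segment_inj (hav.trans hvb) (by omega) (hav'.trans hvb') (by omega) hseg
  rw [hleaf]

theorem subtreeCount_pathStar_of_lt {v : Fin (m + g)} (hv : v.val < m) :
    subtreeCount (pathStar (m + g) g) v = (v.val + 1) * (m - 1 - v.val + 2 ^ g) := by
  rw [subtreeCount_eq_card, filter_connected_eq_image hv,
    card_image_of_injOn (injOn_subtreeCodes hv), card_subtreeCodes]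

theorem subtreeCount_pathStar_le_hub (hm : 0 < m) {p : Fin (m + g)} (hp : m ≤ p.val) :
    subtreeCount (pathStar (m + g) g) p ≤
      subtreeCount (pathStar (m + g) g) ⟨m - 1, by omega⟩ := by
  set c : Fin (m + g) := ⟨m - 1, by omega⟩
  have hpc : p ≠ c := fun h => by rw [Fin.ext_iff] at h; simp only [c] at h; omega
  rw [subtreeCount_eq_card, subtreeCount_eq_card]
  -- trade the subtree `{p}` for `{c}`; every other subtree through the leaf `p` contains the hub
  refine card_le_card_of_injOn (fun S => if S = {p} then {c} else S) (fun S hS => ?_) ?_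
  · simp only [coe_filter, mem_univ, true_and, Set.mem_ofPred_eq] at hS ⊢
    by_cases hSp : S = {p}
    · rw [if_pos hSp]
      exact ⟨mem_singleton_self c,
        induce_connected_of_descent (mem_singleton_self c) (fun _ => 0) (by simp)⟩
    · rw [if_neg hSp]
      obtain ⟨w, hwS, hwp⟩ := (eq_singleton_or_nontrivial hS.1).resolve_left hSp |>.exists_ne p
      obtain ⟨_, -, q, hqS, hadj, rfl, -⟩ :=
        exists_adj_of_induce_preconnected hS.2.preconnected hS.1 hwS (· = p) rfl hwp
      rw [pathStar_adj_iff hm] at hadj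
      have hqc : q = c := Fin.ext (by simp only [c]; omega)
      exact ⟨hqc ▸ hqS, hS.2⟩
  · intro S hS T hT h
    simp only [coe_filter, mem_univ, true_and, Set.mem_ofPred_eq] at hS hT h
    split_ifs at h with hSp hTp hTp
    · rw [hSp, hTp]
    · exact absurd (h ▸ hT.1) (by simpa using hpc)
    · exact absurd (h ▸ hS.1) (by simpa using hpc)
    · exact h

theorem mem_subtreeCore_pathStar (hg : 2 ^ g ≤ m) {t : Fin (m + g)}
    (ht : t.val + 1 = (m + 2 ^ g) / 2) : t ∈ subtreeCore (pathStar (m + g) g) := by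
  have hm : 0 < m := lt_of_lt_of_le (Nat.two_pow_pos g) hg
  have count_eq {v : Fin (m + g)} (hv : v.val < m) :
      subtreeCount (pathStar (m + g) g) v = (v.val + 1) * (m + 2 ^ g - (v.val + 1)) := by
    rw [subtreeCount_pathStar_of_lt hv, Nat.sub_sub, Nat.add_comm 1, Nat.sub_add_comm (by omega)]
  have le_count_t (j : ℕ) : j * (m + 2 ^ g - j) ≤ subtreeCount (pathStar (m + g) g) t := by
    rw [count_eq (by omega), ht]
    exact mul_sub_le_half_mul_sub_half _ _
  intro u
  rcases lt_or_ge u.val m with hu | hu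
  · rw [count_eq hu]
    exact le_count_t _
  · calc subtreeCount (pathStar (m + g) g) u
        ≤ subtreeCount (pathStar (m + g) g) ⟨m - 1, by omega⟩ :=
          subtreeCount_pathStar_le_hub hm hu
      _ = m * (m + 2 ^ g - m) := by rw [count_eq (by simp only; omega), Nat.sub_add_cancel hm]
      _ ≤ _ := le_count_t m

end PathStar

theorem IsMinimalG0.two_pow_add_one_le {n g₀ g : ℕ} (h : IsMinimalG0 n g₀) (hg : 0 < g)
    (hgg₀ : g < g₀) : 2 ^ g + 1 ≤ n - g := by
  by_contra hlt
  exact absurd (h.2.2 g hg (by omega)) (by omega)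

theorem subtreeCore_label_le_general (n g₀ : ℕ) (hg₀ : IsMinimalG0 n g₀)
    (k : ℕ) (hk1 : 1 ≤ k) (hk2 : k ≤ g₀ - 2) :
    ∃ α : ℕ, ∃ i : Fin n, i.val + 1 + α = n - g₀ ∧
      i ∈ subtreeCore (pathStar n (g₀ - k)) := by
  obtain ⟨g, rfl⟩ : ∃ g, g₀ = g + k := ⟨g₀ - k, by omega⟩
  rw [Nat.add_sub_cancel]
  have hm := hg₀.two_pow_add_one_le (g := g) (by omega) (by omega)
  have hlast := hg₀.two_pow_add_one_le (g := g + (k - 1)) (by omega) (by omega)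
  have hpow := two_pow_add_le_two_pow_add g (k - 1)
  have hpos := Nat.two_pow_pos g
  obtain ⟨m, rfl⟩ : ∃ m, n = m + g := ⟨n - g, by omega⟩
  refine ⟨m + g - (g + k) - (m + 2 ^ g) / 2, ⟨(m + 2 ^ g) / 2 - 1, by omega⟩, ?_,
    mem_subtreeCore_pathStar (by omega) ?_⟩ <;> dsimp only <;> omega

/-- If `g₀` is the smallest positive integer with `2 ^ g₀ + 1 > n - g₀`,
then for `1 ≤ k ≤ g₀ - 2` the subtree core of `P_{n-g₀+k, g₀-k}` contains a path
vertex of label `n - g₀ - α` for some `α ≥ 0` (the vertex with label `L` has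
index `L - 1`, i.e. `i.val + 1 = L`). -/
theorem subtreeCore_label_le (n g₀ : ℕ) (hn : 5 ≤ n) (hg₀ : IsMinimalG0 n g₀)
    (k : ℕ) (hk1 : 1 ≤ k) (hk2 : k ≤ g₀ - 2) :
    ∃ α : ℕ, ∃ i : Fin n, i.val + 1 + α = n - g₀ ∧
      i ∈ subtreeCore (pathStar n (g₀ - k)) :=
  subtreeCore_label_le_general n g₀ hg₀ k hk1 hk2

end TreeCenters

end
end

section
/- The sequence δ_n(C,C_d)/n converges to 1/4 as n → ∞, where δ_n(C,C_d) is the maximum, over all trees T on n vertices, of the distance between the center and the centroid of T. -/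
open scoped Classical

noncomputable section

lemma tendsto_div_of_abs_sub_le {a : ℕ → ℝ} {c C : ℝ}
    (h : ∀ᶠ n in Filter.atTop, |a n - c * n| ≤ C) :
    Filter.Tendsto (fun n => a n / n) Filter.atTop (nhds c) := by
  have h0 : Filter.Tendsto (fun n : ℕ => (a n - c * n) / n) Filter.atTop (nhds 0) :=
    squeeze_zero_norm' (h.mono fun n hn => by
        rw [norm_div, Real.norm_natCast]
        exact div_le_div_of_nonneg_right hn (Nat.cast_nonneg n))
      (tendsto_const_div_atTop_nhds_zero_nat C)
  refine (add_zero c ▸ h0.const_add c).congr' ?_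
  filter_upwards [Filter.eventually_ne_atTop 0] with n hn
  field_simp
  ring

namespace SimpleGraph

variable {V : Type*} {G : SimpleGraph V}

lemma dist_add_dist_of_mem_support {u v x : V} {p : G.Walk u v}
    (hp : p.length = G.dist u v) (hx : x ∈ p.support) :
    G.dist u x + G.dist x v = G.dist u v := by
  have hsplit := congrArg Walk.length (p.take_spec hx)
  rw [Walk.length_append] at hsplit
  have := (p.takeUntil x hx).reachable.dist_triangle_left v
  have := dist_le (p.takeUntil x hx)
  have := dist_le (p.dropUntil x hx)
  omega

lemma natAbs_sub_le_dist (f : V → ℤ) (hf : ∀ a b, G.Adj a b → (f a - f b).natAbs ≤ 1)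
    {u v : V} (h : G.Reachable u v) : (f u - f v).natAbs ≤ G.dist u v := by
  obtain ⟨p, hp⟩ := h.exists_walk_length_eq_dist
  rw [← hp]
  clear hp h
  induction p with
  | nil => simp
  | @cons a c b hadj q ih =>
    rw [Walk.length_cons]
    have := hf a c hadj
    omega

lemma IsTree.length_eq_dist {u v : V} (hG : G.IsTree) {p : G.Walk u v} (hp : p.IsPath) :
    p.length = G.dist u v := by
  obtain ⟨q, hq, hql⟩ := hG.connected.exists_path_of_dist u v
  rw [← hql, Subtype.mk.inj ((hG.isAcyclic.subsingleton_path u v).elim ⟨p, hp⟩ ⟨q, hq⟩)]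

lemma isBridge_of_forall_adj_mem_not_mem {u v : V} (S : Set V) (hu : u ∈ S) (hv : v ∉ S)
    (hS : ∀ a b, G.Adj a b → a ∈ S → b ∉ S → s(a, b) = s(u, v)) : G.IsBridge s(u, v) := by
  rw [isBridge_iff_forall_walk_mem_edges]
  intro p
  obtain ⟨d, hd, ha, hb⟩ := p.exists_boundary_dart S hu hv
  rw [← hS _ _ d.adj ha hb]
  exact List.mem_map_of_mem hd

lemma reachable_induce_ne_iff {c x u : V} (hx : x ≠ c) (hu : u ≠ c) :
    (G.induce {v | v ≠ c}).Reachable ⟨x, hx⟩ ⟨u, hu⟩ ↔ ∃ w : G.Walk x u, c ∉ w.support := by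
  constructor
  · rintro ⟨p⟩
    refine ⟨p.map (Embedding.induce {v | v ≠ c}).toHom, fun hc => ?_⟩
    obtain ⟨y, -, hy⟩ := List.mem_map.mp (p.support_map _ ▸ hc)
    exact y.2 hy
  · rintro ⟨w, hw⟩
    exact ⟨w.induce {v | v ≠ c} fun y hy => ne_of_mem_of_not_mem hy hw⟩

end SimpleGraph

namespace TreeCenters

open SimpleGraph

variable {V : Type*}

section Extremal

variable {G : SimpleGraph V}

lemma eccent_le {v : V} {m : ℕ} (h : ∀ u, G.dist v u ≤ m) : eccent G v ≤ m :=
  csSup_le' (by rintro _ ⟨u, rfl⟩; exact h u)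

lemma weight_le {v : V} {m : ℕ}
    (h : ∀ K : (G.induce {u | u ≠ v}).ConnectedComponent, Nat.card K.supp ≤ m) :
    weight G v ≤ m :=
  csSup_le' (by rintro _ ⟨K, rfl⟩; exact h K)

lemma exists_setDist_eq {A B : Set V} (hA : A.Nonempty) (hB : B.Nonempty) :
    ∃ a ∈ A, ∃ b ∈ B, setDist G A B = G.dist a b :=
  Nat.sInf_mem (s := {d | ∃ a ∈ A, ∃ b ∈ B, d = G.dist a b})
    (hA.elim fun a ha => hB.elim fun b hb => ⟨_, a, ha, b, hb, rfl⟩)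

variable [Finite V]

lemma dist_le_eccent (G : SimpleGraph V) (v u : V) : G.dist v u ≤ eccent G v :=
  le_csSup (Set.finite_range _).bddAbove ⟨u, rfl⟩

lemma exists_dist_eq_eccent [Nonempty V] (v : V) : ∃ u, G.dist v u = eccent G v :=
  Nat.sSup_mem (Set.range_nonempty _) (Set.finite_range _).bddAbove

lemma card_supp_le_weight {v : V} (K : (G.induce {u | u ≠ v}).ConnectedComponent) :
    Nat.card K.supp ≤ weight G v :=
  le_csSup (Set.finite_range _).bddAbove ⟨K, rfl⟩

lemma ncard_le_weight {c u : V} (hu : u ≠ c) {T : Set V}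
    (hT : ∀ x ∈ T, ∃ w : G.Walk x u, c ∉ w.support) : T.ncard ≤ weight G c := by
  let K := (G.induce {v | v ≠ c}).connectedComponentMk ⟨u, hu⟩
  calc T.ncard ≤ (Subtype.val '' K.supp).ncard := Set.ncard_le_ncard (fun x hx => by
        obtain ⟨w, hw⟩ := hT x hx
        have hx : x ≠ c := ne_of_mem_of_not_mem w.start_mem_support hw
        exact ⟨⟨x, hx⟩, ConnectedComponent.sound ((reachable_induce_ne_iff hx hu).mpr ⟨w, hw⟩),
          rfl⟩) (Set.toFinite _)
    _ = Nat.card K.supp := by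
      rw [Set.ncard_image_of_injective _ Subtype.val_injective, Nat.card_coe_set_eq]
    _ ≤ weight G c := card_supp_le_weight K

lemma exists_card_supp_eq_weight {v x : V} (hx : x ≠ v) :
    ∃ K : (G.induce {u | u ≠ v}).ConnectedComponent, Nat.card K.supp = weight G v :=
  Nat.sSup_mem (Set.range_nonempty_iff_nonempty.mpr ⟨G.induce _ |>.connectedComponentMk ⟨x, hx⟩⟩)
    (Set.finite_range _).bddAbove

lemma center_nonempty [Nonempty V] : (center G).Nonempty :=
  Finite.exists_min (eccent G)

lemma centroid_nonempty [Nonempty V] : (centroid G).Nonempty :=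
  Finite.exists_min (weight G)

end Extremal

/-- For `u` adjacent to `c` in a tree, this is the vertex set of the component of `T - c`
containing `u`. -/
def branch (G : SimpleGraph V) (u c : V) : Set V :=
  {x | G.dist x u < G.dist x c}

@[simp]
lemma mem_branch {G : SimpleGraph V} {x u c : V} : x ∈ branch G u c ↔ G.dist x u < G.dist x c :=
  Iff.rfl

section Branch

variable {G : SimpleGraph V}

lemma ne_of_mem_branch {x u c : V} (hx : x ∈ branch G u c) : x ≠ c := by
  rintro rfl
  simp at hx

lemma exists_walk_of_mem_branch (hG : G.Connected) {x u c : V} (hx : x ∈ branch G u c) :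
    ∃ w : G.Walk x u, c ∉ w.support := by
  obtain ⟨p, hp⟩ := hG.exists_walk_length_eq_dist x u
  refine ⟨p, fun hc => ?_⟩
  have := dist_le (p.takeUntil c hc)
  have := p.length_takeUntil_le_length hc
  exact absurd hx (by rw [mem_branch]; omega)

variable (hG : G.IsTree)
include hG

lemma mem_branch_of_walk {x u c : V} (hadj : G.Adj u c) (w : G.Walk x u)
    (hw : c ∉ w.support) : x ∈ branch G u c := by
  have hc : c ∉ w.bypass.support := fun h => hw (w.support_bypass_subset_support h)
  have hlen := hG.length_eq_dist (w.bypass_isPath.concat hc hadj)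
  rw [Walk.length_concat] at hlen
  have := dist_le w.bypass
  rw [mem_branch]
  omega

lemma compl_branch {u c : V} (hadj : G.Adj u c) : (branch G u c)ᶜ = branch G c u := by
  ext x
  have := hG.dist_ne_of_adj x hadj
  rw [Set.mem_compl_iff, mem_branch, mem_branch]
  omega

lemma image_supp_eq_branch {u c : V} (hadj : G.Adj u c) :
    Subtype.val '' ((G.induce {v | v ≠ c}).connectedComponentMk ⟨u, hadj.ne⟩).supp =
      branch G u c := by
  ext x
  simp only [Set.mem_image, ConnectedComponent.mem_supp_iff, ConnectedComponent.eq,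
    Subtype.exists, exists_and_right, exists_eq_right]
  constructor
  · rintro ⟨hx, hreach⟩
    obtain ⟨w, hw⟩ := (reachable_induce_ne_iff hx hadj.ne).mp hreach
    exact mem_branch_of_walk hG hadj w hw
  · intro hx
    exact ⟨ne_of_mem_branch hx,
      (reachable_induce_ne_iff _ hadj.ne).mpr (exists_walk_of_mem_branch hG.connected hx)⟩

lemma card_supp_eq_ncard_branch {u c : V} (hadj : G.Adj u c) :
    Nat.card ((G.induce {v | v ≠ c}).connectedComponentMk ⟨u, hadj.ne⟩).supp =
      (branch G u c).ncard := by
  rw [← image_supp_eq_branch hG hadj, Set.ncard_image_of_injective _ Subtype.val_injective,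
    Nat.card_coe_set_eq]

lemma exists_adj_connectedComponentMk_eq {c : V}
    (K : (G.induce {v | v ≠ c}).ConnectedComponent) :
    ∃ u, ∃ hadj : G.Adj u c, (G.induce {v | v ≠ c}).connectedComponentMk ⟨u, hadj.ne⟩ = K := by
  obtain ⟨⟨x, hx⟩, rfl⟩ := K.exists_rep
  obtain ⟨p, hp⟩ := hG.connected.exists_walk_length_eq_dist c x
  cases p with
  | nil => exact absurd rfl hx
  | cons hadj q =>
    refine ⟨_, hadj.symm, ConnectedComponent.sound ((reachable_induce_ne_iff _ _).mpr
      (exists_walk_of_mem_branch hG.connected ?_)).symm⟩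
    have := dist_le q
    rw [Walk.length_cons] at hp
    rw [mem_branch, dist_comm (u := x), dist_comm (u := x)]
    omega

lemma weight_le_iff [Finite V] {c : V} {m : ℕ} :
    weight G c ≤ m ↔ ∀ u, G.Adj u c → (branch G u c).ncard ≤ m := by
  refine ⟨fun h u hadj => ?_, fun h => weight_le fun K => ?_⟩
  · rw [← card_supp_eq_ncard_branch hG hadj]
    exact (card_supp_le_weight _).trans h
  · obtain ⟨u, hadj, rfl⟩ := exists_adj_connectedComponentMk_eq hG K
    rw [card_supp_eq_ncard_branch hG hadj]
    exact h u hadj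

lemma exists_adj_ncard_branch_eq_weight [Finite V] {c x : V} (hx : x ≠ c) :
    ∃ u, G.Adj u c ∧ (branch G u c).ncard = weight G c := by
  obtain ⟨K, hK⟩ := exists_card_supp_eq_weight hx
  obtain ⟨u, hadj, rfl⟩ := exists_adj_connectedComponentMk_eq hG K
  exact ⟨u, hadj, (card_supp_eq_ncard_branch hG hadj).symm.trans hK⟩

end Branch

section TreeBounds

variable {G : SimpleGraph V} (hG : G.IsTree)
include hG

lemma branch_subset_diff {u c w : V} (hadj : G.Adj u c) (hw : G.Adj w u) (hwc : w ≠ c) :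
    branch G w u ⊆ branch G u c \ {u} := by
  intro x hx
  refine ⟨by_contra fun hxc => hwc ?_, ne_of_mem_branch hx⟩
  rw [← Set.mem_compl_iff, compl_branch hG hadj] at hxc
  obtain ⟨p, hp⟩ := exists_walk_of_mem_branch hG.connected hxc
  obtain ⟨q, hq⟩ := exists_walk_of_mem_branch hG.connected hx
  have hcw := mem_branch_of_walk hG hw (p.reverse.append q) (by simp [hp, hq])
  rw [mem_branch, dist_eq_one_iff_adj.mpr hadj.symm, Nat.lt_one_iff,
    hG.connected.dist_eq_zero_iff] at hcw
  exact hcw.symm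

lemma two_mul_weight_le_card [Finite V] {c : V} (hc : c ∈ centroid G) :
    2 * weight G c ≤ Nat.card V := by
  by_cases! hV : ∀ x, x = c
  · have : weight G c = 0 := Nat.le_zero.mp <| weight_le fun K => by
      obtain ⟨⟨x, hx⟩, -⟩ := K.exists_rep
      exact absurd (hV x) hx
    omega
  obtain ⟨x, hx⟩ := hV
  -- Step to the neighbour `u` in a heaviest branch, of size `W = weight c`: the branch at `u`
  -- containing `c` has `n - W` vertices, and every other branch at `u` at most `W - 1`.
  obtain ⟨u, hadj, hW⟩ := exists_adj_ncard_branch_eq_weight hG hx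
  have hu : u ∈ branch G u c := by simp [dist_eq_one_iff_adj.mpr hadj]
  have hcompl := Set.ncard_add_ncard_compl (branch G u c)
  rw [compl_branch hG hadj] at hcompl
  have hweight : weight G u ≤ max (branch G c u).ncard ((branch G u c).ncard - 1) := by
    refine (weight_le_iff hG).mpr fun w hw => ?_
    by_cases hwc : w = c
    · exact hwc ▸ le_max_left _ _
    · rw [← Set.ncard_sdiff_singleton_of_mem hu]
      exact le_max_of_le_right
        (Set.ncard_le_ncard (branch_subset_diff hG hadj hw hwc) (Set.toFinite _))
  have := hc u
  omega

lemma eccent_le_weight [Finite V] (c : V) : eccent G c ≤ weight G c := by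
  have := hG.connected.nonempty
  obtain ⟨w, hw⟩ := exists_dist_eq_eccent (G := G) c
  obtain ⟨p, hp⟩ := hG.connected.exists_walk_length_eq_dist c w
  cases p with
  | nil => simp [← hw]
  | @cons _ y _ hadj q =>
    have hq := ((Walk.cons_isPath_iff _ _).mp (Walk.isPath_of_length_eq_dist _ hp)).1
    have hsub : {x | x ∈ q.support} ⊆ branch G y c := fun x hx => by
      have h1 := dist_add_dist_of_mem_support (hG.length_eq_dist hq) hx
      have h2 := dist_add_dist_of_mem_support hp
        (by rw [Walk.support_cons]; exact List.mem_cons_of_mem _ hx)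
      have e1 : G.dist x y = G.dist y x := dist_comm
      have e2 : G.dist x c = G.dist c x := dist_comm
      have := hG.length_eq_dist hq
      rw [Walk.length_cons] at hp
      rw [mem_branch]
      omega
    have hcard : {x | x ∈ q.support}.ncard = q.length + 1 := by
      rw [← List.coe_toFinset, Set.ncard_coe_finset, List.toFinset_card_of_nodup hq.support_nodup,
        Walk.length_support]
    calc eccent G c = {x | x ∈ q.support}.ncard := by rw [hcard, ← hw, ← hp, Walk.length_cons]
      _ ≤ (branch G y c).ncard := Set.ncard_le_ncard hsub (Set.toFinite _)
      _ ≤ weight G c := (weight_le_iff hG).mp le_rfl y hadj.symm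

lemma exists_far_mem_branch [Finite V] {z y : V} (hz : z ∈ center G) (hadj : G.Adj z y) :
    ∃ w ∈ branch G z y, eccent G z ≤ G.dist z w + 1 := by
  by_contra! hfar
  have hy : eccent G y < eccent G z := by
    suffices eccent G y ≤ eccent G z - 1 by
      have := dist_le_eccent G z y
      rw [dist_eq_one_iff_adj.mpr hadj] at this
      omega
    refine eccent_le fun u => ?_
    have := dist_le_eccent G z u
    have e1 : G.dist y u = G.dist u y := dist_comm
    have e2 : G.dist z u = G.dist u z := dist_comm
    rcases hG.dist_eq_dist_add_one_of_adj u hadj with h | h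
    · omega
    · have := hfar u (by rw [mem_branch]; omega)
      omega
  exact absurd (hz y) (by omega)

lemma dist_eq_of_mem_branch {z y x x' : V} (hadj : G.Adj z y) (hx : x ∈ branch G z y)
    (hx' : x' ∈ branch G y z) : G.dist x x' = G.dist x z + 1 + G.dist y x' := by
  obtain ⟨p, hp⟩ := hG.connected.exists_walk_length_eq_dist x x'
  have hz : z ∈ p.support := by
    by_contra hz
    obtain ⟨w, hw⟩ := exists_walk_of_mem_branch hG.connected hx'
    have := mem_branch_of_walk hG hadj.symm (p.append w) (by simp [hz, hw])
    rw [mem_branch] at hx this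
    omega
  have := dist_add_dist_of_mem_support hp hz
  have := hG.dist_eq_dist_add_one_of_adj x' hadj
  have e1 : G.dist z x' = G.dist x' z := dist_comm
  have e2 : G.dist y x' = G.dist x' y := dist_comm
  rw [mem_branch] at hx'
  omega

theorem four_mul_dist_le [Finite V] {z c : V} (hz : z ∈ center G) (hc : c ∈ centroid G) :
    4 * G.dist z c ≤ Nat.card V + 2 := by
  obtain ⟨p, hp⟩ := hG.connected.exists_walk_length_eq_dist z c
  have hzc : G.dist z c = G.dist c z := dist_comm
  cases p with
  | nil => simp
  | @cons _ y _ hadj q =>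
    have hcy : G.dist c y + 1 = G.dist c z := by
      have := dist_le q
      have := hG.dist_eq_dist_add_one_of_adj c hadj
      have : G.dist y c = G.dist c y := dist_comm
      rw [Walk.length_cons] at hp
      omega
    obtain ⟨w, hw, hfar⟩ := exists_far_mem_branch hG hz hadj
    have hwc : 2 * G.dist c z ≤ G.dist c w + 1 := by
      have := dist_eq_of_mem_branch hG hadj hw (x' := c) (by rw [mem_branch]; omega)
      have := dist_le_eccent G z c
      have : G.dist w c = G.dist c w := dist_comm
      have : G.dist w z = G.dist z w := dist_comm
      have : G.dist y c = G.dist c y := dist_comm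
      omega
    have := (dist_le_eccent G c w).trans (eccent_le_weight hG c)
    have := two_mul_weight_le_card hG hc
    omega

theorem four_mul_setDist_center_centroid_le [Finite V] :
    4 * setDist G (center G) (centroid G) ≤ Nat.card V + 2 := by
  have := hG.connected.nonempty
  obtain ⟨z, hz, c, hc, h⟩ := exists_setDist_eq (G := G) center_nonempty centroid_nonempty
  exact h ▸ four_mul_dist_le hG hz hc

end TreeBounds

section PathStar

variable {n g : ℕ}

lemma pathStar_adj (hg : g < n) {i j : Fin n} :
    (pathStar n g).Adj i j ↔
      (i.val + 1 = j.val ∧ j.val < n - g) ∨ (j.val + 1 = i.val ∧ i.val < n - g) ∨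
        (i.val = n - g - 1 ∧ n - g ≤ j.val) ∨ (j.val = n - g - 1 ∧ n - g ≤ i.val) := by
  rw [pathStar, fromRel_adj, Ne, Fin.ext_iff]
  omega

lemma pathStar_exists_spine_walk (hg : g < n) {a b : Fin n} (hab : a ≤ b) (hb : b.val < n - g) :
    ∃ w : (pathStar n g).Walk a b, w.length = b - a ∧ ∀ x ∈ w.support, a ≤ x ∧ x ≤ b := by
  obtain ⟨k, hk⟩ : ∃ k, b.val - a.val = k := ⟨_, rfl⟩
  induction k generalizing a with
  | zero =>
    obtain rfl : a = b := Fin.ext (by rw [Fin.le_def] at hab; omega)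
    exact ⟨.nil, by simp, by simp⟩
  | succ k ih =>
    rw [Fin.le_def] at hab
    obtain ⟨w, hw, hsupp⟩ := ih (a := ⟨a + 1, by omega⟩)
      (Fin.le_def.mpr (show a.val + 1 ≤ b.val by omega)) (show b.val - (a.val + 1) = k by omega)
    refine ⟨.cons ((pathStar_adj hg).mpr (.inl ⟨rfl, show a.val + 1 < n - g by omega⟩)) w,
      by simp [hw]; omega, ?_⟩
    simp only [Walk.support_cons, List.mem_cons, forall_eq_or_imp, le_refl, true_and]
    refine ⟨Fin.le_def.mpr hab, fun x hx => ?_⟩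
    have := hsupp x hx
    simp only [Fin.le_def] at this ⊢
    omega

lemma pathStar_exists_walk_hub (hg : g < n) (x : Fin n) :
    ∃ w : (pathStar n g).Walk x ⟨n - g - 1, by omega⟩,
      ∀ y ∈ w.support, y = x ∨ y.val = n - g - 1 ∨ x.val < y.val ∧ y.val < n - g := by
  by_cases hx : x.val < n - g
  · obtain ⟨w, -, hw⟩ := pathStar_exists_spine_walk hg (a := x) (b := ⟨n - g - 1, by omega⟩)
      (Fin.le_def.mpr (by simp; omega)) (by simp; omega)
    refine ⟨w, fun y hy => ?_⟩
    have := hw y hy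
    simp only [Fin.le_def, Fin.ext_iff] at this ⊢
    omega
  · have hadj : (pathStar n g).Adj x ⟨n - g - 1, by omega⟩ := (pathStar_adj hg).mpr (by simp; omega)
    exact ⟨hadj.toWalk, by simp⟩

lemma pathStar_connected (hg : g < n) : (pathStar n g).Connected :=
  (connected_iff_exists_forall_reachable _).mpr ⟨⟨n - g - 1, by omega⟩, fun x =>
    (pathStar_exists_walk_hub hg x).elim fun w _ => w.reachable.symm⟩

lemma pathStar_isAcyclic (hg : g < n) : (pathStar n g).IsAcyclic := by
  -- The edge from `p` to the vertex `q` one step farther from `0` is cut off by the vertices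
  -- outside the subtree hanging from `q`.
  have key : ∀ p q : Fin n, (p.val + 1 = q.val ∧ q.val < n - g) ∨
      (p.val = n - g - 1 ∧ n - g ≤ q.val) → (pathStar n g).IsBridge s(p, q) := by
    rintro p q (hpq | hpq)
    · refine isBridge_of_forall_adj_mem_not_mem {x | x.val < q.val} (by simp; omega) (by simp)
        fun a b hab ha hb => ?_
      rw [pathStar_adj hg] at hab
      simp only [Set.mem_ofPred_eq, not_lt] at ha hb
      simp only [Sym2.eq_iff, Fin.ext_iff]
      omega
    · refine isBridge_of_forall_adj_mem_not_mem {x | x ≠ q} (by simp [Fin.ext_iff]; omega)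
        (by simp) fun a b hab ha hb => ?_
      rw [pathStar_adj hg] at hab
      simp only [Set.mem_ofPred_eq, not_not, Fin.ext_iff] at ha hb
      simp only [Sym2.eq_iff, Fin.ext_iff]
      omega
  refine isAcyclic_iff_forall_adj_isBridge.mpr fun u v huv => ?_
  rcases ((pathStar_adj hg).mp huv) with h | h | h | h
  · exact key u v (.inl h)
  · exact Sym2.eq_swap ▸ key v u (.inl h)
  · exact key u v (.inr h)
  · exact Sym2.eq_swap ▸ key v u (.inr h)

lemma pathStar_isTree (hg : g < n) : (pathStar n g).IsTree :=
  ⟨pathStar_connected hg, pathStar_isAcyclic hg⟩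

lemma pathStar_succ_le_weight (hg : 2 ≤ n - g) {v : Fin n} (hv : v.val ≠ n - g - 1) :
    g + 1 ≤ weight (pathStar n g) v := by
  have hgn : g < n := by omega
  have hwalk : ∀ x, x ≠ v → (v.val < n - g → v.val < x.val) →
      ∃ w : (pathStar n g).Walk x ⟨n - g - 1, by omega⟩, v ∉ w.support := fun x hxv hvx => by
    obtain ⟨w, hw⟩ := pathStar_exists_walk_hub hgn x
    refine ⟨w, fun hvw => ?_⟩
    have := hw v hvw
    simp only [Fin.ext_iff] at this hxv
    omega
  have hhub : (⟨n - g - 1, by omega⟩ : Fin n) ≠ v := fun h => hv (h ▸ rfl)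
  by_cases hvs : v.val < n - g
  · calc g + 1 ≤ (Set.Ioi v).ncard := by
          rw [← Nat.card_coe_set_eq, Nat.card_eq_fintype_card, ← Set.toFinset_card,
            Set.toFinset_Ioi, Fin.card_Ioi]
          omega
      _ ≤ weight (pathStar n g) v := ncard_le_weight hhub fun x hx =>
          hwalk x (ne_of_gt hx) fun _ => hx
  · calc g + 1 ≤ ({v}ᶜ : Set (Fin n)).ncard := by
          have := Set.ncard_add_ncard_compl {v}
          rw [Set.ncard_singleton, Nat.card_fin] at this
          omega
      _ ≤ weight (pathStar n g) v := ncard_le_weight hhub fun x hx =>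
          hwalk x hx fun h => absurd h hvs

lemma pathStar_centroid (hg : 2 ≤ n - g) (hn : n ≤ 2 * g + 1) {v : Fin n}
    (hv : v ∈ centroid (pathStar n g)) : v.val = n - g - 1 := by
  by_contra hne
  have := pathStar_succ_le_weight hg hne
  have := two_mul_weight_le_card (pathStar_isTree (by omega)) hv
  rw [Nat.card_fin] at this
  omega

lemma pathStar_dist_le (hg : g < n) {a b : Fin n} (hab : a ≤ b) (hb : b.val < n - g) :
    (pathStar n g).dist a b ≤ b - a := by
  obtain ⟨w, hw, -⟩ := pathStar_exists_spine_walk hg hab hb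
  exact hw ▸ dist_le w

lemma pathStar_eccent_le (hgn : g < n) {m : Fin n} (hm : m.val = (n - g) / 2) :
    eccent (pathStar n g) m ≤ n - g - (n - g) / 2 := by
  refine eccent_le fun u => ?_
  by_cases hu : u.val < n - g
  · by_cases hmu : m ≤ u
    · have := pathStar_dist_le hgn hmu hu
      omega
    · have := pathStar_dist_le hgn (le_of_not_ge hmu) (by omega)
      rw [dist_comm] at this
      omega
  · obtain ⟨w, hw, -⟩ := pathStar_exists_spine_walk hgn (a := m) (b := ⟨n - g - 1, by omega⟩)
      (Fin.le_def.mpr (by simp; omega)) (by simp; omega)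
    have := dist_le (w.concat (show (pathStar n g).Adj _ u from
      (pathStar_adj hgn).mpr (.inr (.inr (.inl ⟨rfl, by omega⟩)))))
    rw [Walk.length_concat, hw] at this
    simp only at this
    omega

lemma pathStar_dist_hub_of_mem_center (hg : 0 < g) (hgn : g < n) {v : Fin n}
    (hv : v ∈ center (pathStar n g)) :
    n - g - 1 ≤ (pathStar n g).dist v ⟨n - g - 1, by omega⟩ + (n - g - (n - g) / 2) := by
  have hT := pathStar_isTree hgn
  have hecc := (hv ⟨(n - g) / 2, by omega⟩).trans (pathStar_eccent_le hgn rfl)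
  -- The depth `f` is 1-Lipschitz; as `v` is within `eccent v` of both vertex `0` (depth `0`) and a
  -- leaf (depth `n - g`), its depth is about `(n - g) / 2`, far from the hub's `n - g - 1`.
  let f : Fin n → ℤ := fun x => min (x.val : ℤ) (n - g : ℕ)
  have hf : ∀ a b, (pathStar n g).Adj a b → (f a - f b).natAbs ≤ 1 := fun a b hab => by
    rw [pathStar_adj hgn] at hab
    simp only [f]
    omega
  have := natAbs_sub_le_dist f hf (hT.connected v ⟨0, by omega⟩)
  have := natAbs_sub_le_dist f hf (hT.connected v ⟨n - g, by omega⟩)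
  have := natAbs_sub_le_dist f hf (hT.connected v ⟨n - g - 1, by omega⟩)
  have := dist_le_eccent (pathStar n g) v ⟨0, by omega⟩
  have := dist_le_eccent (pathStar n g) v ⟨n - g, by omega⟩
  simp only [f] at *
  omega

lemma le_setDist_pathStar_add_one (hg : 0 < g) (hgn : 2 ≤ n - g) (hn : n ≤ 2 * g + 1) :
    (n - g) / 2 ≤ setDist (pathStar n g) (center (pathStar n g)) (centroid (pathStar n g)) + 1 := by
  have : Nonempty (Fin n) := ⟨⟨0, by omega⟩⟩
  obtain ⟨a, ha, b, hb, h⟩ :=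
    exists_setDist_eq (G := pathStar n g) center_nonempty centroid_nonempty
  have hb : b = ⟨n - g - 1, by omega⟩ := Fin.ext (pathStar_centroid hgn hn hb)
  have := pathStar_dist_hub_of_mem_center hg (by omega) ha
  rw [h, hb]
  omega

end PathStar

lemma div_four_mem_upperBounds_deltaCCd (n : ℕ) :
    (n + 2) / 4 ∈ upperBounds
      {d | ∃ G : SimpleGraph (Fin n), G.IsTree ∧ d = setDist G (center G) (centroid G)} := by
  rintro _ ⟨G, hG, rfl⟩
  have := four_mul_setDist_center_centroid_le hG
  rw [Nat.card_fin] at this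
  omega

lemma four_mul_deltaCCd_le (n : ℕ) : 4 * deltaCCd n ≤ n + 2 := by
  have : deltaCCd n ≤ (n + 2) / 4 := csSup_le' (div_four_mem_upperBounds_deltaCCd n)
  omega

lemma le_four_mul_deltaCCd_add_six (n : ℕ) : n ≤ 4 * deltaCCd n + 6 := by
  rcases Nat.lt_or_ge n 3 with hn | hn
  · omega
  have := le_setDist_pathStar_add_one (n := n) (g := n / 2) (by omega) (by omega) (by omega)
  have : setDist _ _ _ ≤ deltaCCd n := le_csSup ⟨_, div_four_mem_upperBounds_deltaCCd n⟩
    ⟨_, pathStar_isTree (g := n / 2) (by omega), rfl⟩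
  omega

/-- `δ_n(C, C_d) / n → 1/4` as `n → ∞`. -/
theorem tendsto_deltaCCd_div :
    Filter.Tendsto (fun n : ℕ => (deltaCCd n : ℝ) / n) Filter.atTop (nhds (1 / 4)) := by
  refine tendsto_div_of_abs_sub_le (C := 3 / 2) (.of_forall fun n => ?_)
  have h1 : 4 * (deltaCCd n : ℝ) ≤ n + 2 := by exact_mod_cast four_mul_deltaCCd_le n
  have h2 : (n : ℝ) ≤ 4 * deltaCCd n + 6 := by exact_mod_cast le_four_mul_deltaCCd_add_six n
  rw [abs_le]
  constructor <;> linarith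

end TreeCenters

end
end

section
/- Let T be a tree and let u, v, w be three distinct vertices of T such that {u,v} and {v,w} are edges of T. Then 2·f_T(v) > f_T(u) + f_T(w). -/
/-!
Sort the subtrees containing `v` by which of `u`, `w` they contain. In an acyclic graph a subtree
containing `u` but not `v` stays on the `u`-side of the edge `uv`, so adding `v` injects these
subtrees into the `v`-subtrees containing `u` but not `w`. Counting `v`-subtrees `S`, this gives
`f(u) ≤ #{u ∈ S} + #{u ∈ S, w ∉ S}` and `f(w) ≤ #{w ∈ S} + #{w ∈ S, u ∉ S}`. Regrouped as
`#{u ∈ S} + #{w ∈ S, u ∉ S}` and `#{w ∈ S} + #{u ∈ S, w ∉ S}`, each half counts the `v`-subtrees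
meeting `{u, w}`, and so misses the subtree `{v}`.
-/

open scoped Classical

noncomputable section

namespace SimpleGraph

variable {V : Type*} {G : SimpleGraph V} {u v w : V}

theorem IsAcyclic.mem_of_connected_induce (hG : G.IsAcyclic) (huw : u ≠ w) (huv : G.Adj u v)
    (hvw : G.Adj v w) {s : Set V} (hs : (G.induce s).Connected) (hu : u ∈ s) (hw : w ∈ s) :
    v ∈ s := by
  obtain ⟨p, hp⟩ := (hs ⟨u, hu⟩ ⟨w, hw⟩).exists_isPath
  let ι := Embedding.induce (G := G) s
  have hw' : w ∉ (Path.singleton huv : G.Walk u v).support := by simp [huw.symm, hvw.ne']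
  -- the path from `u` to `w` inside `s` is the unique one, `u v w`
  have hv : v ∈ (p.map ι.toHom).support :=
    hG.mem_support_of_ne_mem_support_of_adj_of_isPath (hp.map ι.injective) (Path.singleton huv).2
      hvw.symm hw'
  rw [Walk.support_map, List.mem_map] at hv
  obtain ⟨x, -, rfl⟩ := hv
  exact x.2

theorem connected_induce_singleton (G : SimpleGraph V) (v : V) : (G.induce {v}).Connected := by
  rw [induce_singleton_eq_top]
  exact connected_top

theorem Adj.connected_induce_insert (huv : G.Adj u v) {s : Set V} (hs : (G.induce s).Connected)
    (hu : u ∈ s) : (G.induce (insert v s)).Connected := by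
  rw [Set.insert_eq]
  exact connected_induce_union (connected_induce_singleton G v).preconnected hs.preconnected rfl
    hu huv.symm

end SimpleGraph

namespace TreeCenters

open Finset

variable {V : Type*} [Fintype V] {G : SimpleGraph V} {u v w : V}

def subtreesContaining (G : SimpleGraph V) (v : V) : Finset (Finset V) :=
  {S | v ∈ S ∧ (G.induce (S : Set V)).Connected}

theorem subtreeCount_eq_card_subtreesContaining (G : SimpleGraph V) (v : V) :
    subtreeCount G v = #(subtreesContaining G v) := by
  rw [subtreeCount, Nat.card_eq_fintype_card, Fintype.card_subtype, subtreesContaining]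

theorem card_filter_notMem_subtreesContaining_le (hG : G.IsAcyclic) (huw : u ≠ w)
    (huv : G.Adj u v) (hvw : G.Adj v w) :
    #{S ∈ subtreesContaining G u | v ∉ S} ≤ #{S ∈ subtreesContaining G v | w ∉ S ∧ u ∈ S} := by
  refine card_le_card_of_injOn (insert v) ?_ ?_
  · intro S hS
    simp only [subtreesContaining, mem_coe, mem_filter, mem_univ, true_and] at hS ⊢
    obtain ⟨⟨hu, hS⟩, hv⟩ := hS
    refine ⟨⟨mem_insert_self v S, by rw [coe_insert]; exact huv.connected_induce_insert hS hu⟩, ?_,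
      mem_insert_of_mem hu⟩
    rw [mem_insert, not_or]
    exact ⟨hvw.ne', fun hw => hv (hG.mem_of_connected_induce huw huv hvw hS hu hw)⟩
  · intro S hS T hT hST
    simp only [mem_coe, mem_filter] at hS hT
    rw [← erase_insert hS.2, ← erase_insert hT.2]
    exact congrArg (erase · v) hST

theorem subtreeCount_le_card_filter_add_card_filter (hG : G.IsAcyclic) (huw : u ≠ w)
    (huv : G.Adj u v) (hvw : G.Adj v w) :
    subtreeCount G u ≤
      #{S ∈ subtreesContaining G v | u ∈ S} + #{S ∈ subtreesContaining G v | w ∉ S ∧ u ∈ S} := by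
  have hboth : {S ∈ subtreesContaining G u | v ∈ S} = {S ∈ subtreesContaining G v | u ∈ S} := by
    ext S
    simp only [subtreesContaining, mem_filter, mem_univ, true_and]
    tauto
  rw [subtreeCount_eq_card_subtreesContaining, ← card_filter_add_card_filter_not (fun S => v ∈ S),
    hboth]
  exact Nat.add_le_add_left (card_filter_notMem_subtreesContaining_le hG huw huv hvw) _

theorem card_filter_add_card_filter_lt_subtreeCount (huv : u ≠ v) (hwv : w ≠ v) :
    #{S ∈ subtreesContaining G v | u ∈ S} + #{S ∈ subtreesContaining G v | u ∉ S ∧ w ∈ S} <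
      subtreeCount G v := by
  have hsingleton : #{S ∈ subtreesContaining G v | u ∉ S ∧ w ∈ S} <
      #{S ∈ subtreesContaining G v | u ∉ S} := by
    rw [← filter_filter]
    refine card_lt_card (filter_ssubset.mpr ⟨({v} : Finset V), ?_, by simpa using hwv⟩)
    simp only [subtreesContaining, mem_filter, mem_univ, mem_singleton, true_and, huv,
      not_false_eq_true, and_true]
    rw [coe_singleton]
    exact G.connected_induce_singleton v
  have hsplit := card_filter_add_card_filter_not (s := subtreesContaining G v) (fun S => u ∈ S)
  rw [subtreeCount_eq_card_subtreesContaining]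
  omega

theorem subtreeCount_strict_concave_general {V : Type*} [Fintype V] (T : SimpleGraph V)
    (hT : T.IsTree) (u v w : V) (huw : u ≠ w)
    (h1 : T.Adj u v) (h2 : T.Adj v w) :
    subtreeCount T u + subtreeCount T w < 2 * subtreeCount T v := by
  have hu := subtreeCount_le_card_filter_add_card_filter hT.isAcyclic huw h1 h2
  have hw := subtreeCount_le_card_filter_add_card_filter hT.isAcyclic huw.symm h2.symm h1.symm
  have huw_lt := card_filter_add_card_filter_lt_subtreeCount (G := T) (w := w) h1.ne h2.ne'
  have hwu_lt := card_filter_add_card_filter_lt_subtreeCount (G := T) (w := u) h2.ne' h1.ne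
  omega

/-- If `u, v, w` are distinct vertices of a tree `T` with `{u,v}` and
`{v,w}` edges of `T`, then `2 f_T(v) > f_T(u) + f_T(w)`. -/
theorem subtreeCount_strict_concave {V : Type*} [Fintype V] (T : SimpleGraph V)
    (hT : T.IsTree) (u v w : V) (huv : u ≠ v) (hvw : v ≠ w) (huw : u ≠ w)
    (h1 : T.Adj u v) (h2 : T.Adj v w) :
    subtreeCount T u + subtreeCount T w < 2 * subtreeCount T v :=
  subtreeCount_strict_concave_general T hT u v w huw h1 h2

end TreeCenters

end
end

section
/- Let T be a tree, let v be a vertex in the subtree core S_c(T), and let y be a pendant vertex of T that is not adjacent to v (and y ≠ v). Let T̃ be the tree obtained from T by deleting y (together with its incident edge) and adding a new pendant vertex adjacent to v. Then S_c(T̃) = {v}. -/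
/-!
Let `N A B` be the number of connected vertex sets containing `A` and avoiding `B`, and `f` the
subtree count. If `y` is a leaf with neighbour `x`, a connected set containing `y` and another
vertex contains `x` and stays connected without `y`, so `f(u) = N {u} {y} + N {x,u} {y}` for
`u ≠ y` and `f(y) = N {x} {y} + 1`. The trees `T` and `T̃` agree away from `y`, so these counts are
shared. Hence `f_T̃(v) = 2 N {v} {y}`, which beats `f_T̃(y) = N {v} {y} + 1` since `v` has a
neighbour other than `y`. For `u ∉ {v, y}`, split `N {x,v} {y}` according to whether `u` is
present; the part without `u` is strictly smaller than `N {v} {y,u}` (witness `{v}`), which turns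
`f_T(u) ≤ f_T(v)` into `f_T̃(u) = N {u} {y} + N {v,u} {y} < 2 N {v} {y}`.
-/

open scoped Classical

noncomputable section

namespace TreeCenters

variable {V : Type*}

open SimpleGraph Finset

section LeafConnectivity

variable {G : SimpleGraph V} {s : Set V} {x y : V}

lemma adj_of_neighborSet_eq (hy : G.neighborSet y = {x}) : G.Adj y x := by
  simp [← mem_neighborSet, hy]

lemma induce_singleton_connected (v : V) : (G.induce {v}).Connected := by
  rw [induce_singleton_eq_top]
  exact connected_top

lemma induce_insert_connected (hs : (G.induce s).Connected) (hx : x ∈ s) (hxy : G.Adj x y) :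
    (G.induce (insert y s)).Connected := by
  rw [Set.insert_eq, Set.union_comm]
  exact connected_induce_union hs.preconnected (induce_singleton_connected y).preconnected hx rfl
    hxy

lemma induce_diff_singleton_connected (hs : (G.induce s).Connected)
    (hy : (G.neighborSet y).Subsingleton) (hx : x ∈ s) (hxy : x ≠ y) :
    (G.induce (s \ {y})).Connected := by
  rw [connected_iff_exists_forall_reachable]
  refine ⟨⟨x, hx, hxy⟩, fun ⟨b, hb, hby⟩ => ?_⟩
  obtain ⟨p, hp⟩ := (hs.preconnected ⟨x, hx⟩ ⟨b, hb⟩).exists_isPath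
  let q := p.map (Embedding.induce (G := G) s).toHom
  have hq_path : q.IsPath := hp.map (Embedding.induce (G := G) s).injective
  have hyq : y ∉ q.support :=
    hq_path.isTrail.not_mem_support_of_subsingleton_neighborSet hxy.symm (Ne.symm hby) hy
  have hq : ∀ z ∈ q.support, z ∈ s \ {y} := by
    intro z hz
    obtain ⟨a, -, rfl⟩ := List.mem_map.1 (Walk.support_map _ p ▸ hz)
    exact ⟨a.2, fun h => hyq (h ▸ hz)⟩
  exact ⟨q.induce (s \ {y}) hq⟩

lemma mem_of_induce_connected_of_neighborSet_eq (hs : (G.induce s).Connected)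
    (hy : G.neighborSet y = {x}) (hys : y ∈ s) {u : V} (hus : u ∈ s) (huy : u ≠ y) : x ∈ s := by
  obtain ⟨p⟩ := hs.preconnected ⟨y, hys⟩ ⟨u, hus⟩
  have hnil : ¬p.Nil := Walk.not_nil_of_ne fun h => huy (congrArg Subtype.val h).symm
  have hsnd : (p.snd : V) ∈ G.neighborSet y := p.adj_snd hnil
  rw [hy, Set.mem_singleton_iff] at hsnd
  exact hsnd ▸ p.snd.2

end LeafConnectivity

section Subtrees

variable [Fintype V] {G : SimpleGraph V} {A B : Finset V} {x y : V}

variable (G) in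
def subtrees (A B : Finset V) : Finset (Finset V) :=
  {S | A ⊆ S ∧ Disjoint S B ∧ (G.induce (S : Set V)).Connected}

@[simp]
lemma mem_subtrees {S : Finset V} :
    S ∈ subtrees G A B ↔ A ⊆ S ∧ Disjoint S B ∧ (G.induce (S : Set V)).Connected := by
  simp [subtrees]

variable (G) in
lemma subtreeCount_eq_card_subtrees (u : V) : subtreeCount G u = #(subtrees G {u} ∅) := by
  rw [subtreeCount, Nat.card_eq_fintype_card, Fintype.card_subtype]
  congr 1
  ext S
  simp

variable (G) in
lemma card_subtrees_eq_add (u : V) :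
    #(subtrees G A B) = #(subtrees G (insert u A) B) + #(subtrees G A (insert u B)) := by
  rw [← card_filter_add_card_filter_not (p := (u ∈ ·))]
  congr 2 <;> ext S <;> simp only [mem_filter, mem_subtrees, insert_subset_iff,
    disjoint_insert_right] <;> tauto

lemma subtrees_anti {A' B' : Finset V} (hA : A' ⊆ A) (hB : B' ⊆ B) :
    subtrees G A B ⊆ subtrees G A' B' := fun S hS => by
  rw [mem_subtrees] at hS ⊢
  exact ⟨hA.trans hS.1, hS.2.1.mono_right hB, hS.2.2⟩

lemma singleton_mem_subtrees {v : V} (hv : v ∉ B) : {v} ∈ subtrees G {v} B := by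
  rw [mem_subtrees, coe_singleton]
  exact ⟨subset_rfl, disjoint_singleton_left.2 hv, induce_singleton_connected v⟩

lemma two_le_card_subtrees {v w : V} (hvw : G.Adj v w) (hv : v ∉ B) (hw : w ∉ B) :
    2 ≤ #(subtrees G {v} B) := by
  have hpair : ({v, w} : Finset V) ∈ subtrees G {v} B := by
    rw [mem_subtrees, coe_pair]
    exact ⟨by simp, by simp [hv, hw], induce_pair_connected_of_adj hvw⟩
  have hne : ({v} : Finset V) ≠ {v, w} := fun h =>
    hvw.ne' (mem_singleton.1 (h ▸ mem_insert_of_mem (mem_singleton_self w)))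
  calc 2 = #{({v} : Finset V), {v, w}} := (card_pair hne).symm
    _ ≤ #(subtrees G {v} B) := card_le_card <| by
      simp only [insert_subset_iff, singleton_subset_iff, singleton_mem_subtrees hv, hpair,
        and_self]

lemma subtrees_congr {G' : SimpleGraph V}
    (h : ∀ a b, a ∉ B → b ∉ B → (G.Adj a b ↔ G'.Adj a b)) : subtrees G A B = subtrees G' A B := by
  ext S
  simp only [mem_subtrees]
  refine and_congr_right fun _ => and_congr_right fun hSB => ?_
  have : G.induce (S : Set V) = G'.induce S := by
    ext ⟨a, ha⟩ ⟨b, hb⟩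
    exact h a b (disjoint_left.1 hSB ha) (disjoint_left.1 hSB hb)
  rw [this]

lemma card_subtrees_insert_leaf (hy : G.neighborSet y = {x}) (hyA : y ∉ A) (hA : A.Nonempty)
    (hyB : y ∉ B) : #(subtrees G (insert y A) B) = #(subtrees G (insert x A) (insert y B)) := by
  have hyx := adj_of_neighborSet_eq hy
  have hy₁ : (G.neighborSet y).Subsingleton := hy ▸ Set.subsingleton_singleton
  refine card_nbij' (·.erase y) (insert y ·) (fun S hS => ?_) (fun S hS => ?_)
    (fun S hS => insert_erase ((mem_subtrees.1 hS).1 (mem_insert_self y A)))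
    (fun S hS => erase_insert (disjoint_insert_right.1 (mem_subtrees.1 hS).2.1).1)
  · obtain ⟨hAS, hSB, hS⟩ := mem_subtrees.1 hS
    obtain ⟨hyS, hAS⟩ := insert_subset_iff.1 hAS
    obtain ⟨u, hu⟩ := hA
    have hxS : x ∈ S := mem_of_induce_connected_of_neighborSet_eq hS hy hyS (hAS hu)
      (ne_of_mem_of_not_mem hu hyA)
    refine mem_subtrees.2 ⟨insert_subset (mem_erase.2 ⟨hyx.ne', hxS⟩) (subset_erase.2 ⟨hAS, hyA⟩),
      disjoint_insert_right.2 ⟨notMem_erase y S, hSB.mono_left (erase_subset y S)⟩, ?_⟩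
    rw [coe_erase]
    exact induce_diff_singleton_connected hS hy₁ hxS hyx.ne'
  · obtain ⟨hAS, hSB, hS⟩ := mem_subtrees.1 hS
    obtain ⟨hxS, hAS⟩ := insert_subset_iff.1 hAS
    refine mem_subtrees.2 ⟨insert_subset_insert y hAS,
      disjoint_insert_left.2 ⟨hyB, (disjoint_insert_right.1 hSB).2⟩, ?_⟩
    rw [coe_insert]
    exact induce_insert_connected hS hxS hyx.symm

lemma subtrees_singleton_leaf (hy : G.neighborSet y = {x}) : subtrees G {y} {x} = {{y}} := by
  ext S
  rw [mem_singleton]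
  refine ⟨fun hS => ?_, ?_⟩
  · obtain ⟨hyS, hSx, hS⟩ := mem_subtrees.1 hS
    refine eq_singleton_iff_unique_mem.2 ⟨singleton_subset_iff.1 hyS, fun u hu => ?_⟩
    by_contra huy
    exact disjoint_singleton_right.1 hSx
      (mem_of_induce_connected_of_neighborSet_eq hS hy (singleton_subset_iff.1 hyS) hu huy)
  · rintro rfl
    exact singleton_mem_subtrees (by simpa using (adj_of_neighborSet_eq hy).ne)

lemma subtreeCount_of_ne_leaf (hy : G.neighborSet y = {x}) {u : V} (hu : u ≠ y) :
    subtreeCount G u = #(subtrees G {u} {y}) + #(subtrees G {x, u} {y}) := by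
  rw [subtreeCount_eq_card_subtrees, card_subtrees_eq_add G y,
    card_subtrees_insert_leaf hy (by simpa using hu.symm) (singleton_nonempty u) (notMem_empty y),
    insert_empty, add_comm]

lemma subtreeCount_leaf (hy : G.neighborSet y = {x}) :
    subtreeCount G y = #(subtrees G {x} {y}) + 1 := by
  have hyx : y ≠ x := (adj_of_neighborSet_eq hy).ne
  rw [subtreeCount_eq_card_subtrees, card_subtrees_eq_add G x, pair_comm,
    card_subtrees_insert_leaf hy (by simpa using hyx) (singleton_nonempty x) (notMem_empty y),
    insert_eq_of_mem (mem_singleton_self x), insert_empty, insert_empty,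
    subtrees_singleton_leaf hy, card_singleton]

lemma card_subtrees_add_lt {u v : V} (hv : v ∉ B) (hxv : x ≠ v) (huv : u ≠ v)
    (h : #(subtrees G {u} B) + #(subtrees G {x, u} B) ≤
      #(subtrees G {v} B) + #(subtrees G {x, v} B)) :
    #(subtrees G {u} B) + #(subtrees G {v, u} B) < 2 * #(subtrees G {v} B) := by
  have hsplit_v := card_subtrees_eq_add G (A := {v}) (B := B) u
  have hsplit_xv := card_subtrees_eq_add G (A := {x, v}) (B := B) u
  have hle : #(subtrees G (insert u {x, v}) B) ≤ #(subtrees G {x, u} B) :=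
    card_le_card (subtrees_anti (by simp [insert_subset_iff]) subset_rfl)
  have hlt : #(subtrees G {x, v} (insert u B)) < #(subtrees G {v} (insert u B)) := by
    refine card_lt_card ((ssubset_iff_of_subset (subtrees_anti (by simp) subset_rfl)).2
      ⟨{v}, singleton_mem_subtrees (by simp [hv, huv.symm]), fun hv' => hxv ?_⟩)
    simpa using (mem_subtrees.1 hv').1
  rw [pair_comm] at hsplit_v
  omega

end Subtrees

lemma subtreeCore_eq_singleton {G : SimpleGraph V} {v : V}
    (h : ∀ u ≠ v, subtreeCount G u < subtreeCount G v) : subtreeCore G = {v} := by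
  ext u
  simp only [subtreeCore, Set.mem_ofPred_eq, Set.mem_singleton_iff]
  refine ⟨fun hu => by_contra fun huv => (h u huv).not_ge (hu v), ?_⟩
  rintro rfl w
  rcases eq_or_ne w u with rfl | hw
  exacts [le_rfl, (h w hw).le]

section MoveLeaf

variable (G : SimpleGraph V) (v y : V)

def moveLeaf : SimpleGraph V :=
  SimpleGraph.fromRel fun a b => (G.Adj a b ∧ a ≠ y ∧ b ≠ y) ∨ (a = v ∧ b = y)

variable {G v y}

lemma moveLeaf_adj_of_ne {a b : V} (ha : a ≠ y) (hb : b ≠ y) :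
    (moveLeaf G v y).Adj a b ↔ G.Adj a b := by
  simp only [moveLeaf, fromRel_adj]
  constructor
  · rintro ⟨-, (⟨h, -⟩ | ⟨-, rfl⟩) | (⟨h, -⟩ | ⟨-, rfl⟩)⟩
    exacts [h, absurd rfl hb, h.symm, absurd rfl ha]
  · exact fun h => ⟨h.ne, Or.inl (Or.inl ⟨h, ha, hb⟩)⟩

lemma neighborSet_moveLeaf (hne : y ≠ v) : (moveLeaf G v y).neighborSet y = {v} := by
  ext w
  simp only [mem_neighborSet, moveLeaf, fromRel_adj, Set.mem_singleton_iff]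
  grind

end MoveLeaf

/-- Let `v` be in the subtree core of a tree `T` and let `y` be a
pendant vertex of `T` neither equal nor adjacent to `v`. If `T'` is obtained from
`T` by deleting `y` (with its incident edge) and adding a new pendant vertex
adjacent to `v` (here the same vertex `y` is reused as the new pendant), then the
subtree core of `T'` is `{v}`. -/
theorem subtreeCore_move_pendant {V : Type*} [Fintype V] (T : SimpleGraph V)
    (hT : T.IsTree) (v y : V) (hv : v ∈ subtreeCore T)
    (hy : Nat.card (T.neighborSet y) = 1) (hadj : ¬ T.Adj v y) (hne : y ≠ v) :
    subtreeCore (SimpleGraph.fromRel fun a b =>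
      (T.Adj a b ∧ a ≠ y ∧ b ≠ y) ∨ (a = v ∧ b = y)) = {v} := by
  change subtreeCore (moveLeaf T v y) = {v}
  obtain ⟨x, hx⟩ := Set.ncard_eq_one.1 ((Nat.card_coe_set_eq _).symm.trans hy)
  have hxv : x ≠ v := by
    rintro rfl
    exact hadj (adj_of_neighborSet_eq hx).symm
  have hy' := neighborSet_moveLeaf (G := T) hne
  have hsame : ∀ A, subtrees (moveLeaf T v y) A {y} = subtrees T A {y} := fun A =>
    subtrees_congr fun a b ha hb =>
      moveLeaf_adj_of_ne (by simpa using ha) (by simpa using hb)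
  have hvy : v ∉ ({y} : Finset V) := by simpa using hne.symm
  have htwo : 2 ≤ #(subtrees T {v} {y}) := by
    have := nontrivial_of_ne v y hne.symm
    obtain ⟨w, hvw⟩ := hT.connected.preconnected.exists_adj_of_nontrivial v
    exact two_le_card_subtrees hvw hvy (by simpa using fun h : w = y => hadj (h ▸ hvw))
  refine subtreeCore_eq_singleton fun u huv => ?_
  rw [subtreeCount_of_ne_leaf hy' hne.symm, hsame, hsame, insert_eq_of_mem (mem_singleton_self v)]
  rcases eq_or_ne u y with rfl | huy
  · rw [subtreeCount_leaf hy', hsame]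
    omega
  · have hcore := hv u
    rw [subtreeCount_of_ne_leaf hx huy, subtreeCount_of_ne_leaf hx hne.symm] at hcore
    rw [subtreeCount_of_ne_leaf hy' huy, hsame, hsame]
    have := card_subtrees_add_lt hvy hxv huv hcore
    omega

end TreeCenters

end
end
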